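/- arXiv:2304.11927 — 5 statements merged into one kernel-verified Lean document; each statement's English description precedes it below -/
import Mathlib

section
/- Let φ be an AV-uniform ABMV rule, let G = (N, A) be a graph, and let κ be an integer with 2 ≤ κ ≤ |N|. Construct: candidates C = N ∪ {p, p'} with p, p' fresh; registered votes V: κ − 2 copies of the vote {p, p'}; and, for each edge {u, u'} ∈ A, one unregistered vote v(u, u') = {u, u'}. Then G has a clique of size κ if and only if there exists a set U' of at most κ(κ−1)/2 unregistered votes such that p is not contained in any winning κ-committee of φ at (C, V ∪ U'). -/
/-!
The AV score of a committee is the sum of the approval counts of its members, so the AV winning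
`κ`-committees are exactly the `κ`-sets of candidates with the highest approval counts, and `p` is in
no winner iff every member of every winner has strictly more approvals than `p`, which has `κ - 2`.
If `S` is a `κ`-clique, adding its `κ(κ-1)/2` edges gives each vertex of `S` exactly `κ - 1`
approvals and every other candidate at most `κ - 2`, so a committee containing `p` loses to `S`.
Conversely, a winner `w` avoiding `p` also avoids `p'` (which ties with `p`), and each of its `κ`
members lies in at least `κ - 1` of the at most `κ(κ-1)/2` added edges; double counting then forces
the added edges to be exactly the pairs inside `w`, so `w` is a clique.
-/

open Finset

attribute [local instance] Classical.propDecidable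

universe u

variable {α : Type u}

/-- The Thiele ω-score of a committee `w` in the election with votes `V`. -/
noncomputable def thieleScore [DecidableEq α] (ω : ℕ → ℝ) (V : Multiset (Finset α))
    (w : Finset α) : ℝ :=
  (V.map fun v => ω (v ∩ w).card).sum

/-- The ω margin contribution of candidate `c` to committee `w`. -/
noncomputable def marginContrib [DecidableEq α] (ω : ℕ → ℝ) (V : Multiset (Finset α))
    (w : Finset α) (c : α) : ℝ :=
  thieleScore ω V (insert c w) - thieleScore ω V w

/-- Candidates of `C \ w` whose ω margin contribution to `w` is maximum. -/
noncomputable def maxMarginSet [DecidableEq α] (ω : ℕ → ℝ) (V : Multiset (Finset α))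
    (C w : Finset α) : Finset α :=
  (C \ w).filter fun c => ∀ c' ∈ C \ w, marginContrib ω V w c' ≤ marginContrib ω V w c

/-- Among the maximizers, the candidate(s) earliest in the tie-breaking order `pri`
(the order with `a ⊳ b` iff `pri a < pri b`). -/
noncomputable def seqNext [DecidableEq α] (ω : ℕ → ℝ) (pri : α → ℕ) (V : Multiset (Finset α))
    (C w : Finset α) : Finset α :=
  (maxMarginSet ω V C w).filter fun c => ∀ c' ∈ maxMarginSet ω V C w, pri c ≤ pri c'

/-- The winning `k`-committee of the sequential ω-Thiele rule with tie-breaking order `pri`: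
starting from `∅`, repeatedly add the candidate with maximum ω margin contribution,
breaking ties in favor of the candidate earliest in the order. -/
noncomputable def seqCommittee [DecidableEq α] (ω : ℕ → ℝ) (pri : α → ℕ)
    (V : Multiset (Finset α)) (C : Finset α) : ℕ → Finset α
  | 0 => ∅
  | k + 1 => seqCommittee ω pri V C k ∪ seqNext ω pri V C (seqCommittee ω pri V C k)

/-- The AV score of a committee. -/
noncomputable def avScore [DecidableEq α] (V : Multiset (Finset α)) (w : Finset α) : ℕ :=
  (V.map fun v => (v ∩ w).card).sum

/-- AV winning `k`-committees: the `k`-subsets of `C` of maximum AV score. -/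
noncomputable def avWinners [DecidableEq α] (C : Finset α) (V : Multiset (Finset α)) (k : ℕ) :
    Finset (Finset α) :=
  (C.powersetCard k).filter fun w => ∀ w' ∈ C.powersetCard k, avScore V w' ≤ avScore V w

/-- The SAV score of a committee. -/
noncomputable def savScore [DecidableEq α] (V : Multiset (Finset α)) (w : Finset α) : ℝ :=
  (V.map fun v => ((w ∩ v).card : ℝ) / (v.card : ℝ)).sum

/-- SAV winning `k`-committees: the `k`-subsets of `C` of maximum SAV score. -/
noncomputable def savWinners [DecidableEq α] (C : Finset α) (V : Multiset (Finset α)) (k : ℕ) :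
    Finset (Finset α) :=
  (C.powersetCard k).filter fun w => ∀ w' ∈ C.powersetCard k, savScore V w' ≤ savScore V w

/-- The NSAV score of a committee (with respect to candidate set `C`). -/
noncomputable def nsavScore [DecidableEq α] (C : Finset α) (V : Multiset (Finset α))
    (w : Finset α) : ℝ :=
  (V.map fun v => ((w ∩ v).card : ℝ) / (v.card : ℝ)).sum
    - (V.map fun v => ((w \ v).card : ℝ) / ((C \ v).card : ℝ)).sum

/-- The PAV score of a committee. -/
noncomputable def pavScore [DecidableEq α] (V : Multiset (Finset α)) (w : Finset α) : ℝ :=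
  (V.map fun v => ∑ i ∈ Finset.range (v ∩ w).card, (1 : ℝ) / (i + 1)).sum

/-- PAV winning `k`-committees: the `k`-subsets of `C` of maximum PAV score. -/
noncomputable def pavWinners [DecidableEq α] (C : Finset α) (V : Multiset (Finset α)) (k : ℕ) :
    Finset (Finset α) :=
  (C.powersetCard k).filter fun w => ∀ w' ∈ C.powersetCard k, pavScore V w' ≤ pavScore V w

/-- The ABCCV score of a committee: the number of votes approving at least one member. -/
noncomputable def abccvScore [DecidableEq α] (V : Multiset (Finset α)) (w : Finset α) : ℕ :=
  Multiset.card (V.filter fun v => (v ∩ w).Nonempty)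

/-- ABCCV winning `k`-committees: the `k`-subsets of `C` of maximum ABCCV score. -/
noncomputable def abccvWinners [DecidableEq α] (C : Finset α) (V : Multiset (Finset α)) (k : ℕ) :
    Finset (Finset α) :=
  (C.powersetCard k).filter fun w => ∀ w' ∈ C.powersetCard k, abccvScore V w' ≤ abccvScore V w

/-- The MAV score of a committee: the maximum Hamming distance to a vote. -/
noncomputable def mavScore [DecidableEq α] (V : Multiset (Finset α)) (w : Finset α) : ℕ :=
  (V.map fun v => (w \ v).card + (v \ w).card).sup

/-- MAV winning `k`-committees: the `k`-subsets of `C` of minimum MAV score. -/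
noncomputable def mavWinners [DecidableEq α] (C : Finset α) (V : Multiset (Finset α)) (k : ℕ) :
    Finset (Finset α) :=
  (C.powersetCard k).filter fun w => ∀ w' ∈ C.powersetCard k, mavScore V w ≤ mavScore V w'

section ApprovalCount

variable [DecidableEq α]

def approvalCount (V : Multiset (Finset α)) (c : α) : ℕ :=
  V.countP (c ∈ ·)

@[simp]
lemma approvalCount_add (V W : Multiset (Finset α)) (c : α) :
    approvalCount (V + W) c = approvalCount V c + approvalCount W c :=
  Multiset.countP_add _ _ _

@[simp]
lemma approvalCount_replicate (m : ℕ) (v : Finset α) (c : α) :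
    approvalCount (Multiset.replicate m v) c = if c ∈ v then m else 0 := by
  induction m with
  | zero => simp [approvalCount]
  | succ m ih => split_ifs at ih ⊢ <;> simp_all [approvalCount, Multiset.replicate_succ]

lemma approvalCount_val (U : Finset (Finset α)) (c : α) :
    approvalCount U.val c = #{e ∈ U | c ∈ e} := by
  rw [approvalCount, Multiset.countP_eq_card_filter]
  rfl

lemma avScore_eq_sum_approvalCount (V : Multiset (Finset α)) (w : Finset α) :
    avScore V w = ∑ c ∈ w, approvalCount V c := by
  induction V using Multiset.induction_on with
  | empty => simp [avScore, approvalCount]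
  | cons v V ih =>
    simp only [approvalCount, Multiset.countP_cons, sum_add_distrib] at ih ⊢
    rw [← ih, sum_boole, filter_mem_eq_inter, inter_comm, avScore, Multiset.map_cons,
      Multiset.sum_cons, add_comm]
    rfl

lemma avScore_insert_erase_add (V : Multiset (Finset α)) {w : Finset α} {x c : α}
    (hx : x ∈ w) (hc : c ∉ w) :
    avScore V (insert c (w.erase x)) + approvalCount V x = avScore V w + approvalCount V c := by
  rw [avScore_eq_sum_approvalCount, avScore_eq_sum_approvalCount,
    sum_insert fun h => hc (mem_of_mem_erase h), ← sum_erase_add w _ hx]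
  ring

lemma avWinners_nonempty {C : Finset α} (V : Multiset (Finset α)) {k : ℕ} (hk : k ≤ #C) :
    (avWinners C V k).Nonempty := by
  obtain ⟨w, hwC, hmax⟩ :=
    exists_max_image (C.powersetCard k) (avScore V) (powersetCard_nonempty.2 hk)
  exact ⟨w, mem_filter.2 ⟨hwC, hmax⟩⟩

lemma insert_erase_mem_avWinners {C : Finset α} {V : Multiset (Finset α)} {k : ℕ}
    {w : Finset α} {x c : α} (hw : w ∈ avWinners C V k) (hx : x ∈ w) (hc : c ∈ C)
    (hcw : c ∉ w) (hle : approvalCount V x ≤ approvalCount V c) :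
    insert c (w.erase x) ∈ avWinners C V k := by
  obtain ⟨hwC, hmax⟩ := mem_filter.1 hw
  obtain ⟨hwsub, hwcard⟩ := mem_powersetCard.1 hwC
  have hscore := avScore_insert_erase_add V hx hcw
  refine mem_filter.2 ⟨mem_powersetCard.2 ⟨insert_subset hc ((erase_subset x w).trans hwsub),
    ?_⟩, fun w' hw' => (hmax w' hw').trans (by omega)⟩
  rw [card_insert_of_notMem fun h => hcw (mem_of_mem_erase h), card_erase_add_one hx, hwcard]

lemma approvalCount_lt_of_mem_avWinners {C : Finset α} {V : Multiset (Finset α)} {k : ℕ}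
    {w : Finset α} {x c : α} (hc : c ∈ C) (hcC : ∀ w' ∈ avWinners C V k, c ∉ w')
    (hw : w ∈ avWinners C V k) (hx : x ∈ w) : approvalCount V c < approvalCount V x := by
  by_contra! hle
  exact hcC _ (insert_erase_mem_avWinners hw hx hc (hcC w hw) hle) (mem_insert_self c _)

lemma notMem_avWinners_of_approvalCount_lt {C S w : Finset α} {V : Multiset (Finset α)}
    {k m : ℕ} {c : α} (hS : S ∈ C.powersetCard k)
    (hbound : ∀ x ∈ C, approvalCount V x ≤ m) (hSm : ∀ x ∈ S, approvalCount V x = m)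
    (hc : approvalCount V c < m) (hcw : c ∈ w) : w ∉ avWinners C V k := by
  intro hw
  obtain ⟨hwC, hmax⟩ := mem_filter.1 hw
  obtain ⟨hwsub, hwcard⟩ := mem_powersetCard.1 hwC
  have hlt : avScore V w < avScore V S := by
    rw [avScore_eq_sum_approvalCount, avScore_eq_sum_approvalCount]
    calc ∑ x ∈ w, approvalCount V x < ∑ _x ∈ w, m :=
          sum_lt_sum (fun x hx => hbound x (hwsub hx)) ⟨c, hcw, hc⟩
      _ = ∑ x ∈ S, approvalCount V x := by
          rw [sum_congr rfl hSm, sum_const, sum_const, hwcard, (mem_powersetCard.1 hS).2]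
  exact (hmax S hS).not_gt hlt

lemma approvalCount_powersetCard_succ {S : Finset α} {x : α} (hx : x ∈ S) (k : ℕ) :
    approvalCount (S.powersetCard (k + 1)).val x = (#S - 1).choose k := by
  have hsplit : S.powersetCard (k + 1) =
      (S.erase x).powersetCard (k + 1) ∪ ((S.erase x).powersetCard k).image (insert x) := by
    rw [← powersetCard_succ_insert (notMem_erase x S), insert_erase hx]
  have hxe : ∀ n, ∀ e ∈ (S.erase x).powersetCard n, x ∉ e := fun _ e he hxe =>
    notMem_erase x S ((mem_powersetCard.1 he).1 hxe)
  rw [approvalCount_val, hsplit, filter_union, filter_false_of_mem (hxe (k + 1)),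
    filter_true_of_mem, empty_union, card_image_of_injOn, card_powersetCard, card_erase_of_mem hx]
  · intro s hs t ht hst
    rw [← erase_insert (hxe k s hs), ← erase_insert (hxe k t ht)]
    exact congrArg (·.erase x) hst
  · simp only [mem_image]
    rintro e ⟨s, -, rfl⟩
    exact mem_insert_self x s

lemma approvalCount_powersetCard_of_notMem {S : Finset α} {x : α} (hx : x ∉ S) (k : ℕ) :
    approvalCount (S.powersetCard k).val x = 0 := by
  rw [approvalCount_val, card_eq_zero, filter_eq_empty_iff]
  exact fun e he hxe => hx ((mem_powersetCard.1 he).1 hxe)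

lemma eq_powersetCard_two_of_le_approvalCount {U : Finset (Finset α)} {w : Finset α}
    (hU : ∀ e ∈ U, #e = 2) (hcard : #U ≤ (#w).choose 2)
    (hdeg : ∀ x ∈ w, #w - 1 ≤ approvalCount U.val x) : U = w.powersetCard 2 := by
  have hchoose : (#w).choose 2 * 2 = #w * (#w - 1) := by
    rw [Nat.choose_two_right, Nat.div_two_mul_two_of_even (Nat.even_mul_pred_self _)]
  have hlow : #w * (#w - 1) ≤ ∑ e ∈ U, #(e ∩ w) :=
    calc #w * (#w - 1) = ∑ _x ∈ w, (#w - 1) := by rw [sum_const, smul_eq_mul]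
      _ ≤ ∑ x ∈ w, approvalCount U.val x := sum_le_sum hdeg
      _ = ∑ e ∈ U, #(e ∩ w) := (avScore_eq_sum_approvalCount _ _).symm
  have hup : ∑ e ∈ U, #e = 2 * #U := by
    rw [sum_congr rfl hU, sum_const, smul_eq_mul, mul_comm]
  have hinter : ∀ e ∈ U, #(e ∩ w) ≤ #e := fun e _ => card_le_card inter_subset_left
  have hsum_le : ∑ e ∈ U, #(e ∩ w) ≤ ∑ e ∈ U, #e := sum_le_sum hinter
  have hsub : ∀ e ∈ U, e ⊆ w := by
    have heq := (sum_eq_sum_iff_of_le hinter).1 (by omega)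
    exact fun e he => inter_eq_left.1 (eq_of_subset_of_card_le inter_subset_left (heq e he).ge)
  refine eq_of_subset_of_card_le (fun e he => mem_powersetCard.2 ⟨hsub e he, hU e he⟩) ?_
  rw [card_powersetCard]
  omega

lemma approvalCount_replicate_add_of_mem {m : ℕ} {v : Finset α} {U : Finset (Finset α)} {c : α}
    (hc : c ∈ v) (hU : ∀ e ∈ U, c ∉ e) : approvalCount (Multiset.replicate m v + U.val) c = m := by
  rw [approvalCount_add, approvalCount_replicate, if_pos hc, approvalCount_val,
    filter_false_of_mem hU, card_empty, add_zero]

lemma approvalCount_replicate_add_of_notMem {m : ℕ} {v : Finset α} {W : Multiset (Finset α)}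
    {c : α} (hc : c ∉ v) :
    approvalCount (Multiset.replicate m v + W) c = approvalCount W c := by
  rw [approvalCount_add, approvalCount_replicate, if_neg hc, zero_add]

lemma powersetCard_two_subset_iff {S : Finset α} {A : Finset (Finset α)} :
    S.powersetCard 2 ⊆ A ↔ ∀ u ∈ S, ∀ u' ∈ S, u ≠ u' → ({u, u'} : Finset α) ∈ A := by
  refine ⟨fun h u hu u' hu' huu' => h (mem_powersetCard.2 ⟨?_, card_pair huu'⟩), fun h e he => ?_⟩
  · exact insert_subset hu (singleton_subset_iff.2 hu')
  · obtain ⟨heS, he2⟩ := mem_powersetCard.1 he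
    obtain ⟨u, u', huu', rfl⟩ := card_eq_two.1 he2
    exact h u (heS (mem_insert_self u _)) u' (heS (mem_insert_of_mem (mem_singleton_self u'))) huu'

lemma notMem_of_mem_avWinners_replicate_add_powersetCard {N S w : Finset α} {p p' : α}
    (hp : p ∉ N) (hp' : p' ∉ N) (hSN : S ⊆ N) (hS : 2 ≤ #S)
    (hw : w ∈ avWinners (N ∪ {p, p'})
      (Multiset.replicate (#S - 2) {p, p'} + (S.powersetCard 2).val) #S) : p ∉ w := by
  have hpair : ∀ c ∈ ({p, p'} : Finset α), c ∉ N := by simp [hp, hp']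
  have hcount_pair : ∀ c ∈ ({p, p'} : Finset α),
      approvalCount (Multiset.replicate (#S - 2) {p, p'} + (S.powersetCard 2).val) c = #S - 2 :=
    fun c hc => approvalCount_replicate_add_of_mem hc fun e he hce =>
      hpair c hc (hSN ((mem_powersetCard.1 he).1 hce))
  have hcount_N : ∀ x ∈ N, approvalCount
      (Multiset.replicate (#S - 2) {p, p'} + (S.powersetCard 2).val) x
        = if x ∈ S then #S - 1 else 0 := by
    intro x hx
    rw [approvalCount_replicate_add_of_notMem fun h => hpair x h hx]
    split_ifs with hxS
    · rw [approvalCount_powersetCard_succ hxS 1, Nat.choose_one_right]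
    · exact approvalCount_powersetCard_of_notMem hxS 2
  intro hpw
  refine notMem_avWinners_of_approvalCount_lt (m := #S - 1)
    (mem_powersetCard.2 ⟨hSN.trans subset_union_left, rfl⟩) (fun x hx => ?_)
    (fun x hx => by rw [hcount_N x (hSN hx), if_pos hx])
    (by rw [hcount_pair p (mem_insert_self p _)]; omega) hpw hw
  rcases mem_union.1 hx with hxN | hxp
  · rw [hcount_N x hxN]
    split_ifs <;> omega
  · rw [hcount_pair x hxp]
    omega

lemma subset_and_eq_powersetCard_of_mem_avWinners {N w : Finset α} {U : Finset (Finset α)}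
    {p p' : α} {k : ℕ}
    (hp : p ∉ N) (hp' : p' ∉ N) (hU : ∀ e ∈ U, #e = 2 ∧ e ⊆ N) (hUcard : #U ≤ k.choose 2)
    (hpwin : ∀ w' ∈ avWinners (N ∪ {p, p'}) (Multiset.replicate (k - 2) {p, p'} + U.val) k,
      p ∉ w')
    (hw : w ∈ avWinners (N ∪ {p, p'}) (Multiset.replicate (k - 2) {p, p'} + U.val) k) :
    w ⊆ N ∧ U = w.powersetCard 2 := by
  obtain ⟨hwC, hwcard⟩ := mem_powersetCard.1 (mem_filter.1 hw).1
  have hpair : ∀ c ∈ ({p, p'} : Finset α), c ∉ N := by simp [hp, hp']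
  have hcount_pair : ∀ c ∈ ({p, p'} : Finset α),
      approvalCount (Multiset.replicate (k - 2) {p, p'} + U.val) c = k - 2 :=
    fun c hc => approvalCount_replicate_add_of_mem hc fun e he hce =>
      hpair c hc ((hU e he).2 hce)
  have hlt : ∀ x ∈ w, k - 2 < approvalCount (Multiset.replicate (k - 2) {p, p'} + U.val) x :=
    fun x hx => (hcount_pair p (mem_insert_self p _)).symm.trans_lt
      (approvalCount_lt_of_mem_avWinners (by simp) hpwin hw hx)
  have hwN : w ⊆ N := fun x hx => (mem_union.1 (hwC hx)).resolve_right fun hxp =>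
    (hlt x hx).ne' (hcount_pair x hxp)
  refine ⟨hwN, eq_powersetCard_two_of_le_approvalCount (fun e he => (hU e he).1)
    (hwcard ▸ hUcard) fun x hx => ?_⟩
  have := hlt x hx
  rw [approvalCount_replicate_add_of_notMem fun h => hpair x h (hwN hx)] at this
  omega

end ApprovalCount

/-- correctness of the reduction from Clique to destructive control by
adding voters for every AV-uniform ABMV rule.  Vertices of the graph are candidates;
edges are the 2-element subsets in `Aed`. -/
theorem dcav_av_uniform {γ : Type u} [DecidableEq γ]
    (φ : Finset γ → Multiset (Finset γ) → ℕ → Finset (Finset γ))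
    (huniform : ∀ (C : Finset γ) (V : Multiset (Finset γ)) (k : ℕ), k ≤ C.card →
      (∀ v ∈ V, v ⊆ C) → (∃ s, ∀ v ∈ V, v.card = s) →
      φ C V k = avWinners C V k)
    (N : Finset γ) (Aed : Finset (Finset γ))
    (hedge : ∀ e ∈ Aed, e.card = 2 ∧ e ⊆ N)
    (κ : ℕ) (hκ1 : 2 ≤ κ) (hκ2 : κ ≤ N.card)
    (p p' : γ) (hp : p ∉ N) (hp' : p' ∉ N) (hpp' : p ≠ p') :
    (∃ S ⊆ N, S.card = κ ∧ ∀ u ∈ S, ∀ u' ∈ S, u ≠ u' → ({u, u'} : Finset γ) ∈ Aed) ↔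
      (∃ U' ⊆ Aed, U'.card ≤ κ * (κ - 1) / 2 ∧
        ∀ w ∈ φ (N ∪ {p, p'})
            (Multiset.replicate (κ - 2) ({p, p'} : Finset γ) + U'.val) κ, p ∉ w) := by
  have hκC : κ ≤ #(N ∪ {p, p'}) := by
    rw [card_union_of_disjoint (by simp [hp, hp']), card_pair hpp']
    omega
  have hφ : ∀ U' ⊆ Aed, φ (N ∪ {p, p'}) (Multiset.replicate (κ - 2) {p, p'} + U'.val) κ =
      avWinners (N ∪ {p, p'}) (Multiset.replicate (κ - 2) {p, p'} + U'.val) κ := by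
    intro U' hU'
    refine huniform _ _ _ hκC (fun v hv => ?_) ⟨2, fun v hv => ?_⟩ <;>
      rcases Multiset.mem_add.1 hv with hv | hv
    · exact Multiset.eq_of_mem_replicate hv ▸ subset_union_right
    · exact (hedge v (hU' hv)).2.trans subset_union_left
    · exact Multiset.eq_of_mem_replicate hv ▸ card_pair hpp'
    · exact (hedge v (hU' hv)).1
  rw [← Nat.choose_two_right]
  constructor
  · rintro ⟨S, hSN, rfl, hclique⟩
    have hSA := powersetCard_two_subset_iff.2 hclique
    refine ⟨S.powersetCard 2, hSA, (card_powersetCard 2 S).le, ?_⟩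
    rw [hφ _ hSA]
    exact fun w hw => notMem_of_mem_avWinners_replicate_add_powersetCard hp hp' hSN hκ1 hw
  · rintro ⟨U', hU'A, hU'card, hpwin⟩
    rw [hφ U' hU'A] at hpwin
    obtain ⟨w, hw⟩ := avWinners_nonempty (Multiset.replicate (κ - 2) {p, p'} + U'.val) hκC
    obtain ⟨hwN, rfl⟩ := subset_and_eq_powersetCard_of_mem_avWinners hp hp'
      (fun e he => hedge e (hU'A he)) hU'card hpwin hw
    exact ⟨w, hwN, (mem_powersetCard.1 (mem_filter.1 hw).1).2, powersetCard_two_subset_iff.1 hU'A⟩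
end

section
/- Let κ ≥ 2 be an even integer and let (A, H) be an RX3C instance: |A| = |H| = 3κ, every member of H is a 3-element subset of A, and every a ∈ A belongs to exactly three members of H. Construct: registered candidates C = A ∪ {p} with p fresh; unregistered candidates D = {c(H) : H ∈ H}; votes V (as subsets of C ∪ D): 9κ²/2 + 1 copies of the vote A, and for each a ∈ A one vote v(a) = {p} ∪ {c(H) : a ∈ H ∈ H}; committee size k = 3κ. Then H contains an exact set cover of A (κ pairwise disjoint members whose union is A) if and only if there exists H' ⊆ H with |H'| ≤ κ such that p is not contained in any SAV winning 3κ-committee of the election on candidate set C ∪ {c(H) : H ∈ H'} whose votes are the votes of V restricted to C ∪ {c(H) : H ∈ H'}. -/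
open Finset

attribute [local instance] Classical.propDecidable

universe u

variable {α : Type u}

namespace Stmt16

variable {β : Type u} [DecidableEq β]

/-- Candidate type: an element `a ∈ A`, a candidate `c(H)` for `H ∈ 𝓗`, or the
distinguished candidate `p`. -/
abbrev Cand (β : Type u) := β ⊕ Finset β ⊕ Unit

/-- The distinguished candidate `p`. -/
def pc : Cand β := Sum.inr (Sum.inr ())

/-- The candidate `c(H)`. -/
def cH (s : Finset β) : Cand β := Sum.inr (Sum.inl s)

/-- The set of registered candidates `C = A ∪ {p}`. -/
def Creg (A : Finset β) : Finset (Cand β) := insert pc (A.image Sum.inl)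

/-- The votes: `9κ²/2 + 1` copies of the vote `A`, and for each `a ∈ A` the vote
`v(a) = {p} ∪ {c(H) : a ∈ H ∈ 𝓗}`. -/
def votes (A : Finset β) (H : Finset (Finset β)) (κ : ℕ) : Multiset (Finset (Cand β)) :=
  Multiset.replicate (9 * κ ^ 2 / 2 + 1) (A.image Sum.inl)
    + A.val.map (fun a => insert pc ((H.filter fun s => a ∈ s).image cH))

/-!
Restricted to `C ∪ c(H')`, the election is the construction built from `H'` instead of `H`.
There a member of `A` adds `r = (9κ²/2 + 1)/(3κ) ∈ (3κ/2, 3κ/2 + 1/3)` to a committee's score,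
so the committee `A` scores `3κ r`, and a vote `v(a)` with `e_a` of its sets in `H'` adds
`1/(e_a + 1)` per approved member.

If `H'` is an exact cover, `p` adds `3κ/2` and each `c(H)` adds `3/2`, so a committee with `p`
and `t` of the `c(H)` scores at least `(1 + t) r - (3κ + 3t)/2 > 0` less than `A`. Conversely,
a `c(H)` never adds more than `3 < r`, so no committee without `p` beats `A`. If `|H'| ≤ κ`
and `H'` is not an exact cover, counting shows that some `a₀` is uncovered, and `A - a₀ + p`
beats `A` because `∑ 1/(e_a + 1) ≥ 3κ/2 + 1/3 > r`, by `1/(e + 1) ≥ (4 - e)/6` and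
`∑ e_a = 3|H'| ≤ 3κ`.
-/

section Generic

variable [DecidableEq α]

lemma savScore_add (V₁ V₂ : Multiset (Finset α)) (w : Finset α) :
    savScore (V₁ + V₂) w = savScore V₁ w + savScore V₂ w := by
  simp only [savScore, Multiset.map_add, Multiset.sum_add]

lemma savScore_replicate (n : ℕ) (v w : Finset α) :
    savScore (Multiset.replicate n v) w = n * ((w ∩ v).card / v.card) := by
  simp only [savScore, Multiset.map_replicate, Multiset.sum_replicate, nsmul_eq_mul]

lemma savScore_map_val {ι : Type*} (s : Finset ι) (f : ι → Finset α) (w : Finset α) :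
    savScore (s.val.map f) w = ∑ i ∈ s, ((w ∩ f i).card : ℝ) / (f i).card := by
  simp only [savScore, Multiset.map_map, Function.comp_def, Finset.sum]

lemma savWinners_nonempty {C : Finset α} {V : Multiset (Finset α)} {k : ℕ}
    (h : (C.powersetCard k).Nonempty) : (savWinners C V k).Nonempty := by
  obtain ⟨w, hw, hmax⟩ := exists_max_image _ (savScore V) h
  exact ⟨w, mem_filter.2 ⟨hw, hmax⟩⟩

lemma sum_card_filter_mem_eq {A : Finset α} {T : Finset (Finset α)} {n : ℕ}
    (hT : ∀ s ∈ T, s ⊆ A ∧ s.card = n) :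
    ∑ a ∈ A, (T.filter fun s => a ∈ s).card = n * T.card := by
  calc ∑ a ∈ A, (T.filter fun s => a ∈ s).card
      = ∑ s ∈ T, (A.filter fun a => a ∈ s).card := by
        simp only [card_eq_sum_ones, sum_filter]
        exact sum_comm
    _ = ∑ _s ∈ T, n := sum_congr rfl fun s hs => by
        rw [filter_mem_eq_inter, inter_eq_right.2 (hT s hs).1, (hT s hs).2]
    _ = n * T.card := by rw [sum_const, smul_eq_mul, mul_comm]

lemma forall_card_filter_mem_eq_one_iff {A : Finset α} {T : Finset (Finset α)}
    (hT : ∀ s ∈ T, s ⊆ A) :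
    (∀ a ∈ A, (T.filter fun s => a ∈ s).card = 1) ↔
      (∀ s ∈ T, ∀ t ∈ T, s ≠ t → Disjoint s t) ∧ T.biUnion (fun s => s) = A := by
  constructor
  · intro h
    refine ⟨fun s hs t ht hst => disjoint_left.2 fun a has hat => hst ?_, ?_⟩
    · exact card_le_one.1 (h a (hT s hs has)).le s (mem_filter.2 ⟨hs, has⟩) t
        (mem_filter.2 ⟨ht, hat⟩)
    · refine Subset.antisymm (biUnion_subset.2 hT) fun a ha => ?_
      obtain ⟨s, hs⟩ := card_pos.1 (h a ha ▸ Nat.one_pos)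
      exact mem_biUnion.2 ⟨s, (mem_filter.1 hs).1, (mem_filter.1 hs).2⟩
  · rintro ⟨hdisj, hunion⟩ a ha
    obtain ⟨s, hs, has⟩ := mem_biUnion.1 (hunion ▸ ha)
    refine card_eq_one.2 ⟨s, eq_singleton_iff_unique_mem.2 ⟨mem_filter.2 ⟨hs, has⟩, ?_⟩⟩
    intro t ht
    by_contra hts
    exact disjoint_left.1 (hdisj t (mem_filter.1 ht).1 s hs hts) (mem_filter.1 ht).2 has

lemma card_filter_mem_eq_one_of_covers {A : Finset α} {T : Finset (Finset α)} {n : ℕ}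
    (hT : ∀ s ∈ T, s ⊆ A ∧ s.card = n) (hcard : n * T.card ≤ A.card)
    (hcov : ∀ a ∈ A, 1 ≤ (T.filter fun s => a ∈ s).card) :
    ∀ a ∈ A, (T.filter fun s => a ∈ s).card = 1 := by
  have hsum : ∑ a ∈ A, (T.filter fun s => a ∈ s).card ≤ ∑ _a ∈ A, 1 := by
    rw [sum_card_filter_mem_eq hT, sum_const, smul_eq_mul, mul_one]
    exact hcard
  exact fun a ha =>
    ((sum_eq_sum_iff_of_le hcov).1 ((sum_le_sum hcov).antisymm hsum) a ha).symm

lemma mul_card_eq_card_of_forall_card_filter_mem_eq_one {A : Finset α} {T : Finset (Finset α)}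
    {n : ℕ} (hT : ∀ s ∈ T, s ⊆ A ∧ s.card = n)
    (h : ∀ a ∈ A, (T.filter fun s => a ∈ s).card = 1) : n * T.card = A.card := by
  rw [← sum_card_filter_mem_eq hT, sum_congr rfl h, sum_const, smul_eq_mul, mul_one]

end Generic

lemma sub_div_six_le_inv_succ (n : ℕ) : (4 - n : ℝ) / 6 ≤ 1 / (n + 1) := by
  rw [div_le_div_iff₀ (by norm_num) (by positivity)]
  obtain h | h : n ≤ 1 ∨ 2 ≤ n := by omega
  · interval_cases n <;> norm_num
  · have h : (2 : ℝ) ≤ n := by exact_mod_cast h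
    nlinarith

-- The tangent-line bound `1/(n+1) ≥ (4-n)/6` is exact at `n = 1, 2` and loses `1/3` at `n = 0`.
lemma sum_inv_succ_ge {ι : Type*} {s : Finset ι} {e : ι → ℕ} {i₀ : ι} (hi₀ : i₀ ∈ s)
    (he : e i₀ = 0) :
    (4 * s.card - ∑ i ∈ s, (e i : ℝ)) / 6 + 1 / 3 ≤ ∑ i ∈ s, 1 / ((e i : ℝ) + 1) := by
  have hgap := single_le_sum (f := fun i => 1 / ((e i : ℝ) + 1) - (4 - e i) / 6)
    (fun i _ => sub_nonneg.2 (sub_div_six_le_inv_succ (e i))) hi₀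
  norm_num [he, sum_sub_distrib, ← sum_div] at hgap ⊢
  linarith

omit [DecidableEq β] in
lemma cH_injective : Function.Injective (cH : Finset β → Cand β) := fun _ _ h => by
  simpa [cH] using h

lemma pc_notMem_image_cH (T : Finset (Finset β)) : pc ∉ T.image cH := by
  simp [pc, cH]

lemma pc_notMem_image_inl (A : Finset β) : pc ∉ A.image Sum.inl := by
  simp [pc]

lemma disjoint_image_inl_image_cH (A : Finset β) (T : Finset (Finset β)) :
    Disjoint (A.image Sum.inl) (T.image cH) := by
  simp [disjoint_left, cH]

lemma card_inter_image_cH (w : Finset (Cand β)) (T : Finset (Finset β)) :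
    (w ∩ T.image cH).card = (T.filter fun s => cH s ∈ w).card := by
  rw [← card_image_of_injective _ cH_injective]
  congr 1
  ext x
  simp only [mem_inter, mem_image, mem_filter]
  constructor
  · rintro ⟨hw, s, hs, rfl⟩; exact ⟨s, ⟨hs, hw⟩, rfl⟩
  · rintro ⟨s, ⟨hs, hw⟩, rfl⟩; exact ⟨hw, s, hs, rfl⟩

lemma card_inter_image_inl_add_le (A : Finset β) (T : Finset (Finset β))
    (w : Finset (Cand β)) :
    (w ∩ A.image Sum.inl).card + (w ∩ T.image cH).card + (if pc ∈ w then 1 else 0)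
      ≤ w.card := by
  have hdisj : Disjoint (w ∩ A.image Sum.inl) (w ∩ T.image cH) :=
    (disjoint_image_inl_image_cH A T).mono inter_subset_right inter_subset_right
  have hpc : pc ∉ (w ∩ A.image Sum.inl) ∪ (w ∩ T.image cH) := by
    simp [pc, cH]
  rw [← card_union_of_disjoint hdisj]
  split_ifs with hp
  · rw [← card_insert_of_notMem hpc]
    exact card_le_card (insert_subset hp (union_subset inter_subset_left inter_subset_left))
  · exact card_le_card (union_subset inter_subset_left inter_subset_left)

/-- The vote `v(a)` of the construction, built from `T`. -/
def elemVote (T : Finset (Finset β)) (a : β) : Finset (Cand β) :=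
  insert pc ((T.filter fun s => a ∈ s).image cH)

lemma votes_eq (A : Finset β) (T : Finset (Finset β)) (κ : ℕ) :
    votes A T κ = Multiset.replicate (9 * κ ^ 2 / 2 + 1) (A.image Sum.inl)
      + A.val.map (elemVote T) := rfl

lemma votes_map_inter {A : Finset β} {H T : Finset (Finset β)} (κ : ℕ) (hT : T ⊆ H) :
    (votes A H κ).map (· ∩ (Creg A ∪ T.image cH)) = votes A T κ := by
  simp only [votes, Multiset.map_add, Multiset.map_replicate, Multiset.map_map]
  congr 2
  · exact inter_eq_left.2 ((subset_insert _ _).trans subset_union_left)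
  · funext a
    ext (b | s | ⟨⟩)
    · simp [pc, cH]
    · simpa [Creg, pc, cH] using
        ⟨fun h => ⟨h.2, h.1.2⟩, fun h => ⟨⟨hT h.1, h.2⟩, h.1⟩⟩
    · simp [Creg, pc]

lemma card_elemVote (T : Finset (Finset β)) (a : β) :
    (elemVote T a).card = (T.filter fun s => a ∈ s).card + 1 := by
  rw [elemVote, card_insert_of_notMem (pc_notMem_image_cH _),
    card_image_of_injective _ cH_injective]

lemma card_inter_elemVote (w : Finset (Cand β)) (T : Finset (Finset β)) (a : β) :
    (w ∩ elemVote T a).card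
      = (w ∩ (T.filter fun s => a ∈ s).image cH).card + if pc ∈ w then 1 else 0 := by
  split_ifs with hp
  · rw [elemVote, inter_insert_of_mem hp, card_insert_of_notMem
      fun h => pc_notMem_image_cH _ (mem_inter.1 h).2]
  · rw [elemVote, inter_insert_of_notMem hp, add_zero]

lemma sum_card_inter_elemVote {A : Finset β} {T : Finset (Finset β)}
    (hT : ∀ s ∈ T, s ⊆ A ∧ s.card = 3) (w : Finset (Cand β)) :
    ∑ a ∈ A, (w ∩ elemVote T a).card
      = 3 * (w ∩ T.image cH).card + if pc ∈ w then A.card else 0 := by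
  have hT' : ∀ s ∈ T.filter fun s => cH s ∈ w, s ⊆ A ∧ s.card = 3 :=
    fun s hs => hT s (mem_filter.1 hs).1
  simp only [card_inter_elemVote, sum_add_distrib, card_inter_image_cH]
  rw [← sum_card_filter_mem_eq hT']
  simp only [filter_filter, and_comm]
  split_ifs <;> simp

noncomputable def seatValue (κ : ℕ) : ℝ := ((9 * κ ^ 2 / 2 + 1 : ℕ) : ℝ) / (3 * κ)

lemma three_mul_div_two_lt_seatValue {κ : ℕ} (hκ : 0 < κ) : (3 * κ / 2 : ℝ) < seatValue κ := by
  have h : 9 * κ ^ 2 < 2 * (9 * κ ^ 2 / 2 + 1) := by omega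
  have h' : (9 * κ ^ 2 : ℝ) < 2 * ((9 * κ ^ 2 / 2 + 1 : ℕ) : ℝ) := by exact_mod_cast h
  have hκ' : (0 : ℝ) < κ := by exact_mod_cast hκ
  rw [seatValue, lt_div_iff₀ (by positivity)]
  nlinarith

lemma seatValue_lt {κ : ℕ} (hκ : 2 ≤ κ) : seatValue κ < 3 * κ / 2 + 1 / 3 := by
  have h : 2 * (9 * κ ^ 2 / 2 + 1) ≤ 9 * κ ^ 2 + 2 := by omega
  have h' : 2 * ((9 * κ ^ 2 / 2 + 1 : ℕ) : ℝ) ≤ 9 * κ ^ 2 + 2 := by exact_mod_cast h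
  have hκ' : (2 : ℝ) ≤ κ := by exact_mod_cast hκ
  rw [seatValue, div_lt_iff₀ (by positivity)]
  nlinarith

lemma savScore_votes {A : Finset β} {κ : ℕ} (hA : A.card = 3 * κ) (T : Finset (Finset β))
    (w : Finset (Cand β)) :
    savScore (votes A T κ) w
      = seatValue κ * (w ∩ A.image Sum.inl).card
        + ∑ a ∈ A, ((w ∩ elemVote T a).card : ℝ) / ((T.filter fun s => a ∈ s).card + 1) := by
  rw [votes_eq, savScore_add, savScore_replicate, savScore_map_val,
    card_image_of_injective _ Sum.inl_injective, hA, seatValue]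
  simp only [card_elemVote, Nat.cast_add, Nat.cast_one, Nat.cast_mul, Nat.cast_ofNat]
  ring

lemma image_inl_mem_powersetCard (A : Finset β) (T : Finset (Finset β)) :
    A.image Sum.inl ∈ (Creg A ∪ T.image cH).powersetCard A.card :=
  mem_powersetCard.2 ⟨(subset_insert _ _).trans subset_union_left,
    card_image_of_injective _ Sum.inl_injective⟩

lemma insert_pc_erase_mem_powersetCard {A : Finset β} {a₀ : β} (ha₀ : a₀ ∈ A)
    (T : Finset (Finset β)) :
    insert pc ((A.image Sum.inl).erase (Sum.inl a₀))
      ∈ (Creg A ∪ T.image cH).powersetCard A.card := by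
  refine mem_powersetCard.2 ⟨insert_subset_insert _ (erase_subset _ _) |>.trans
    subset_union_left, ?_⟩
  rw [card_insert_of_notMem fun h => pc_notMem_image_inl A (mem_of_mem_erase h),
    card_erase_of_mem (mem_image_of_mem _ ha₀), card_image_of_injective _ Sum.inl_injective,
    Nat.sub_add_cancel (card_pos.2 ⟨a₀, ha₀⟩)]

section Scores

variable {A : Finset β} {T : Finset (Finset β)} {κ : ℕ}

lemma savScore_votes_image_inl (hA : A.card = 3 * κ) :
    savScore (votes A T κ) (A.image Sum.inl) = seatValue κ * (3 * κ) := by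
  have hdisj : ∀ a, Disjoint (A.image Sum.inl) (elemVote T a) := fun a =>
    disjoint_insert_right.2 ⟨pc_notMem_image_inl A, disjoint_image_inl_image_cH A _⟩
  rw [savScore_votes hA, inter_self, card_image_of_injective _ Sum.inl_injective, hA,
    sum_eq_zero fun a _ => by simp [disjoint_iff_inter_eq_empty.1 (hdisj a)]]
  push_cast
  ring

lemma savScore_votes_lt_of_pc_mem (hκ : 0 < κ) (hA : A.card = 3 * κ)
    (hT : ∀ s ∈ T, s ⊆ A ∧ s.card = 3) (hcov : ∀ a ∈ A, (T.filter fun s => a ∈ s).card = 1)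
    {w : Finset (Cand β)} (hw : w.card ≤ 3 * κ) (hp : pc ∈ w) :
    savScore (votes A T κ) w < savScore (votes A T κ) (A.image Sum.inl) := by
  have hsum : ∑ a ∈ A, ((w ∩ elemVote T a).card : ℝ) / ((T.filter fun s => a ∈ s).card + 1)
      = (3 * (w ∩ T.image cH).card + 3 * κ) / 2 := by
    have h := sum_card_inter_elemVote hT w
    rw [if_pos hp, hA] at h
    rw [sum_congr rfl fun a ha => by rw [hcov a ha], ← sum_div]
    norm_num
    exact_mod_cast h
  have hcard := card_inter_image_inl_add_le A T w
  rw [if_pos hp] at hcard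
  have hcard' : ((w ∩ A.image Sum.inl).card : ℝ) + (w ∩ T.image cH).card + 1 ≤ 3 * κ := by
    exact_mod_cast hcard.trans hw
  have hr := three_mul_div_two_lt_seatValue hκ
  have hκ' : (1 : ℝ) ≤ κ := by exact_mod_cast hκ
  rw [savScore_votes hA, savScore_votes_image_inl hA, hsum]
  nlinarith [mul_nonneg (hr.le.trans' (by positivity)) (by linarith : (0 : ℝ) ≤ 3 * κ
      - (w ∩ A.image Sum.inl).card - (w ∩ T.image cH).card - 1),
    mul_pos (sub_pos.2 hr) (by positivity : (0 : ℝ) < (w ∩ T.image cH).card + 1),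
    mul_nonneg (sub_nonneg.2 hκ') (by positivity : (0 : ℝ) ≤ (w ∩ T.image cH).card)]

lemma savScore_votes_le_of_pc_notMem (hκ : 2 ≤ κ) (hA : A.card = 3 * κ)
    (hT : ∀ s ∈ T, s ⊆ A ∧ s.card = 3) {w : Finset (Cand β)} (hw : w.card ≤ 3 * κ)
    (hp : pc ∉ w) :
    savScore (votes A T κ) w ≤ savScore (votes A T κ) (A.image Sum.inl) := by
  have hsum : ∑ a ∈ A, ((w ∩ elemVote T a).card : ℝ) / ((T.filter fun s => a ∈ s).card + 1)
      ≤ 3 * (w ∩ T.image cH).card := by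
    have h := sum_card_inter_elemVote hT w
    rw [if_neg hp, add_zero] at h
    calc _ ≤ ∑ a ∈ A, ((w ∩ elemVote T a).card : ℝ) :=
          sum_le_sum fun a _ => div_le_self (by positivity) (by simp)
      _ = 3 * (w ∩ T.image cH).card := by exact_mod_cast h
  have hcard := card_inter_image_inl_add_le A T w
  rw [if_neg hp, add_zero] at hcard
  have hcard' : ((w ∩ A.image Sum.inl).card : ℝ) + (w ∩ T.image cH).card ≤ 3 * κ := by
    exact_mod_cast hcard.trans hw
  have hr := three_mul_div_two_lt_seatValue (by omega : 0 < κ)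
  have hκ' : (2 : ℝ) ≤ κ := by exact_mod_cast hκ
  rw [savScore_votes hA, savScore_votes_image_inl hA]
  nlinarith [mul_nonneg (hr.le.trans' (by positivity)) (by linarith : (0 : ℝ) ≤ 3 * κ
      - (w ∩ A.image Sum.inl).card - (w ∩ T.image cH).card),
    mul_nonneg (by linarith : (0 : ℝ) ≤ seatValue κ - 3)
      (by positivity : (0 : ℝ) ≤ (w ∩ T.image cH).card)]

lemma savScore_votes_image_inl_lt (hκ : 2 ≤ κ) (hA : A.card = 3 * κ)
    (hT : ∀ s ∈ T, s ⊆ A ∧ s.card = 3) (hTκ : T.card ≤ κ) {a₀ : β} (ha₀ : a₀ ∈ A)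
    (hunc : (T.filter fun s => a₀ ∈ s).card = 0) :
    savScore (votes A T κ) (A.image Sum.inl)
      < savScore (votes A T κ) (insert pc ((A.image Sum.inl).erase (Sum.inl a₀))) := by
  have hA' : insert pc ((A.image Sum.inl).erase (Sum.inl a₀)) ∩ A.image Sum.inl
      = ((A.image Sum.inl).erase (Sum.inl a₀) : Finset (Cand β)) := by
    rw [insert_inter_of_notMem (pc_notMem_image_inl A), inter_eq_left.2 (erase_subset _ _)]
  have hv : ∀ a, insert pc ((A.image Sum.inl).erase (Sum.inl a₀)) ∩ elemVote T a = {pc} := by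
    intro a
    rw [elemVote, ← insert_inter_distrib, disjoint_iff_inter_eq_empty.1
      ((disjoint_image_inl_image_cH A _).mono (erase_subset _ _)
        (image_subset_image (filter_subset _ _))), insert_empty]
  have hS := sum_inv_succ_ge (e := fun a => (T.filter fun s => a ∈ s).card) ha₀ hunc
  have he : ∑ a ∈ A, ((T.filter fun s => a ∈ s).card : ℝ) ≤ 3 * κ := by
    exact_mod_cast (sum_card_filter_mem_eq hT).trans_le (by omega)
  have hr := seatValue_lt hκ
  rw [savScore_votes_image_inl hA, savScore_votes hA, hA', card_erase_of_mem
    (mem_image_of_mem _ ha₀), card_image_of_injective _ Sum.inl_injective, hA,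
    Nat.cast_sub (by omega)]
  rw [hA] at hS
  simp only [hv, card_singleton, Nat.cast_mul, Nat.cast_ofNat, Nat.cast_one] at hS ⊢
  linarith

end Scores

theorem dcac_sav_general (κ : ℕ) (hκ2 : 2 ≤ κ)
    (A : Finset β) (H : Finset (Finset β))
    (hA : A.card = 3 * κ)
    (hH3 : ∀ s ∈ H, s ⊆ A ∧ s.card = 3) :
    (∃ H' ⊆ H, H'.card = κ ∧ (∀ s ∈ H', ∀ t ∈ H', s ≠ t → Disjoint s t) ∧
        H'.biUnion (fun s => s) = A) ↔
      (∃ H' ⊆ H, H'.card ≤ κ ∧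
        ∀ w ∈ savWinners (Creg A ∪ H'.image cH)
            ((votes A H κ).map (· ∩ (Creg A ∪ H'.image cH))) (3 * κ), pc ∉ w) := by
  constructor
  · rintro ⟨H', hH'H, hcard, hexact⟩
    have hT : ∀ s ∈ H', s ⊆ A ∧ s.card = 3 := fun s hs => hH3 s (hH'H hs)
    have hcov := (forall_card_filter_mem_eq_one_iff fun s hs => (hT s hs).1).2 hexact
    refine ⟨H', hH'H, hcard.le, fun w hw hp => ?_⟩
    rw [votes_map_inter κ hH'H, savWinners, mem_filter, mem_powersetCard] at hw
    exact (savScore_votes_lt_of_pc_mem (by omega) hA hT hcov hw.1.2.le hp).not_ge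
      (hw.2 _ (hA ▸ image_inl_mem_powersetCard A H'))
  · rintro ⟨H', hH'H, hcard, hwin⟩
    have hT : ∀ s ∈ H', s ⊆ A ∧ s.card = 3 := fun s hs => hH3 s (hH'H hs)
    rw [votes_map_inter κ hH'H] at hwin
    by_cases hcov : ∀ a ∈ A, 1 ≤ (H'.filter fun s => a ∈ s).card
    · have hone := card_filter_mem_eq_one_of_covers hT (by omega) hcov
      have hcard' := mul_card_eq_card_of_forall_card_filter_mem_eq_one hT hone
      exact ⟨H', hH'H, by omega,
        (forall_card_filter_mem_eq_one_iff fun s hs => (hT s hs).1).1 hone⟩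
    · exfalso
      obtain ⟨a₀, ha₀, hunc⟩ : ∃ a ∈ A, (H'.filter fun s => a ∈ s).card = 0 := by
        simpa using hcov
      obtain ⟨w, hw⟩ := savWinners_nonempty
        (V := (votes A H' κ)) ⟨_, hA ▸ image_inl_mem_powersetCard A H'⟩
      have hp := hwin w hw
      rw [savWinners, mem_filter, mem_powersetCard] at hw
      have hle := hw.2 _ (hA ▸ insert_pc_erase_mem_powersetCard ha₀ H')
      have hlt := savScore_votes_image_inl_lt hκ2 hA hT hcard ha₀ hunc
      exact hlt.not_ge (hle.trans (savScore_votes_le_of_pc_notMem hκ2 hA hT hw.1.2.le hp))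

/-- correctness of the reduction from RX3C to destructive control by
adding candidates for SAV. -/
theorem dcac_sav (κ : ℕ) (hκ2 : 2 ≤ κ) (hκeven : Even κ)
    (A : Finset β) (H : Finset (Finset β))
    (hA : A.card = 3 * κ) (hHcard : H.card = 3 * κ)
    (hH3 : ∀ s ∈ H, s ⊆ A ∧ s.card = 3)
    (hocc : ∀ a ∈ A, (H.filter fun s => a ∈ s).card = 3) :
    (∃ H' ⊆ H, H'.card = κ ∧ (∀ s ∈ H', ∀ t ∈ H', s ≠ t → Disjoint s t) ∧
        H'.biUnion (fun s => s) = A) ↔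
      (∃ H' ⊆ H, H'.card ≤ κ ∧
        ∀ w ∈ savWinners (Creg A ∪ H'.image cH)
            ((votes A H κ).map (· ∩ (Creg A ∪ H'.image cH))) (3 * κ), pc ∉ w) :=
  dcac_sav_general κ hκ2 A H hA hH3

end Stmt16
end

section
/- Let ω be a Thiele function with ω(2) < 2ω(1), and let (A, H, κ) be a Regular Set Packing instance: A a finite set, H a finite collection of d-element subsets of A for some d ≥ 1, and κ ≥ 1 an integer. Construct: registered candidates C = X ∪ {p}, where p is fresh and X is a set of κ fresh candidates; unregistered candidates D = {c(H) : H ∈ H}; votes V: d copies of the vote {p} and, for each a ∈ A, one vote v(a) = {c(H) : a ∈ H ∈ H}; committee size k = κ; and a tie-breaking linear order ⊳ placing all candidates c(H) first, then p, then all of X. Then H contains κ pairwise disjoint sets if and only if there exists H' ⊆ H with |H'| ≤ κ such that p is not contained in the seqω winning κ-committee, with respect to ⊳, of the election on candidate set C ∪ {c(H) : H ∈ H'} whose votes are the votes of V restricted to C ∪ {c(H) : H ∈ H'}. -/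
/-!
Let `w` be the committee `{c(H) : H ∈ S}` of a partial packing `S`. Candidate `p` then has margin
`d·ω(1)`, the candidates of `X` have margin `0`, and `c(H)` has margin `∑_{a ∈ H} Δω(n_a)`, where
`n_a ≤ 1` counts the sets of `S` containing `a`. As `Δω(1) = ω(2) - ω(1) < ω(1) = Δω(0)`, this is
at most `d·ω(1)`, with equality exactly when `H` is disjoint from every set of `S`. Since the
`c(H)` precede `p` in the tie-breaking order, the rule keeps adding sets disjoint from those
already chosen and picks `p` as soon as none is left; so `p` stays out of the `κ`-committee iff the
added sets contain `κ` pairwise disjoint ones.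
-/

open Finset

attribute [local instance] Classical.propDecidable

universe u

variable {α : Type u}

namespace Stmt17

variable {β : Type u} [DecidableEq β]

/-- Candidate type: a candidate `c(H)` for `H ∈ 𝓗`, a fresh candidate of the set `X`,
or the distinguished candidate `p`. -/
abbrev Cand (β : Type u) := Finset β ⊕ ℕ ⊕ Unit

/-- The distinguished candidate `p`. -/
def pc : Cand β := Sum.inr (Sum.inr ())

/-- The candidate `c(H)`. -/
def cH (s : Finset β) : Cand β := Sum.inl s

/-- The set `X` of `κ` fresh candidates. -/
def Xset (κ : ℕ) : Finset (Cand β) :=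
  (Finset.range κ).image fun j => (Sum.inr (Sum.inl j) : Cand β)

/-- The set of registered candidates `C = X ∪ {p}`. -/
def Creg (κ : ℕ) : Finset (Cand β) := insert pc (Xset κ)

/-- The candidate set after adding the candidates of `𝓗'`. -/
def Cfull (κ : ℕ) (H' : Finset (Finset β)) : Finset (Cand β) :=
  Creg κ ∪ H'.image cH

/-- The votes: `d` copies of `{p}` and, for each `a ∈ A`, the vote
`v(a) = {c(H) : a ∈ H ∈ 𝓗}`. -/
def votes (A : Finset β) (H : Finset (Finset β)) (d : ℕ) : Multiset (Finset (Cand β)) :=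
  Multiset.replicate d ({pc} : Finset (Cand β))
    + A.val.map (fun a => (H.filter fun s => a ∈ s).image cH)

section Thiele

variable [DecidableEq α] (ω : ℕ → ℝ)

theorem marginContrib_eq_sum_ite (V : Multiset (Finset α)) {w : Finset α} {c : α} (hc : c ∉ w) :
    marginContrib ω V w c =
      (V.map fun v => if c ∈ v then ω ((v ∩ w).card + 1) - ω (v ∩ w).card else 0).sum := by
  rw [marginContrib, thieleScore, thieleScore, ← Multiset.sum_map_sub]
  congr 1
  refine Multiset.map_congr rfl fun v _ => ?_
  split_ifs with hcv
  · rw [inter_insert_of_mem hcv, card_insert_of_notMem fun h => hc (mem_inter.1 h).2]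
  · rw [inter_insert_of_notMem hcv, sub_self]

theorem mem_maxMarginSet_iff_of_le {V : Multiset (Finset α)} {C w : Finset α} {c₀ : α}
    (hc₀ : c₀ ∈ C \ w) (hmax : ∀ c ∈ C \ w, marginContrib ω V w c ≤ marginContrib ω V w c₀)
    {c : α} :
    c ∈ maxMarginSet ω V C w ↔ c ∈ C \ w ∧ marginContrib ω V w c = marginContrib ω V w c₀ := by
  simp only [maxMarginSet, mem_filter]
  constructor
  · rintro ⟨hc, hge⟩
    exact ⟨hc, (hmax c hc).antisymm (hge c₀ hc₀)⟩
  · rintro ⟨hc, heq⟩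
    exact ⟨hc, fun c' hc' => heq ▸ hmax c' hc'⟩

theorem seqNext_eq_singleton (pri : α → ℕ) {V : Multiset (Finset α)} {C w : Finset α} {c : α}
    (hc : c ∈ maxMarginSet ω V C w)
    (hmin : ∀ c' ∈ maxMarginSet ω V C w, c' ≠ c → pri c < pri c') :
    seqNext ω pri V C w = {c} := by
  ext c'
  simp only [seqNext, mem_filter, mem_singleton]
  constructor
  · rintro ⟨hc', hle⟩
    by_contra hne
    exact (hmin c' hc' hne).not_ge (hle c hc)
  · rintro rfl
    refine ⟨hc, fun c'' hc'' => ?_⟩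
    rcases eq_or_ne c'' c' with rfl | hne
    exacts [le_rfl, (hmin c'' hc'' hne).le]

variable {ω}

theorem thiele_one_pos (hmono : ∀ i, ω i ≤ ω (i + 1)) (hω : ω 2 < 2 * ω 1) : 0 < ω 1 := by
  linarith [hmono 1]

theorem thiele_delta_le (hω0 : ω 0 = 0) (hω : ω 2 < 2 * ω 1) {n : ℕ} (hn : n ≤ 1) :
    ω (n + 1) - ω n ≤ ω 1 := by
  interval_cases n
  · simp [hω0]
  · show ω 2 - ω 1 ≤ ω 1
    linarith

theorem thiele_delta_eq_iff (hω0 : ω 0 = 0) (hω : ω 2 < 2 * ω 1) {n : ℕ} (hn : n ≤ 1) :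
    ω (n + 1) - ω n = ω 1 ↔ n = 0 := by
  interval_cases n
  · simp [hω0]
  · show ω 2 - ω 1 = ω 1 ↔ 1 = 0
    exact iff_of_false (fun h => by linarith) one_ne_zero

end Thiele

@[simp] theorem cH_mem_image_cH {S : Finset (Finset β)} {s : Finset β} :
    (cH s : Cand β) ∈ S.image cH ↔ s ∈ S :=
  Sum.inl_injective.mem_finset_image

@[simp] theorem pc_notMem_image_cH (S : Finset (Finset β)) : (pc : Cand β) ∉ S.image cH := by
  simp [pc, cH]

theorem cH_mem_Cfull {κ : ℕ} {H : Finset (Finset β)} {s : Finset β} (hs : s ∈ H) :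
    (cH s : Cand β) ∈ Cfull κ H :=
  mem_union_right _ (mem_image_of_mem _ hs)

theorem mem_Cfull_sdiff_image_cH {κ : ℕ} {H' S : Finset (Finset β)} {c : Cand β} :
    c ∈ Cfull κ H' \ S.image cH ↔
      c = pc ∨ (∃ j < κ, c = Sum.inr (Sum.inl j)) ∨ ∃ s ∈ H', s ∉ S ∧ c = cH s := by
  rcases c with s | j | ⟨⟩ <;> simp [Cfull, Creg, Xset, pc, cH]

section Reduction

variable {ω : ℕ → ℝ} {A : Finset β} {H' S : Finset (Finset β)} {d κ : ℕ}

theorem votes_map_inter_Cfull {H : Finset (Finset β)} (hH' : H' ⊆ H) :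
    (votes A H d).map (· ∩ Cfull κ H') = votes A H' d := by
  have hinj : Function.Injective (cH : Finset β → Cand β) := Sum.inl_injective
  have hvote (a : β) : (H.filter fun s => a ∈ s).image cH ∩ Cfull κ H' =
      (H'.filter fun s => a ∈ s).image cH := by
    have hCreg : Disjoint ((H.filter fun s => a ∈ s).image cH) (Creg κ) := by
      simp [disjoint_left, Creg, Xset, pc, cH]
    rw [Cfull, inter_union_distrib_left, disjoint_iff_inter_eq_empty.1 hCreg, empty_union, ← image_inter _ _ hinj,
      filter_inter, inter_eq_right.2 hH']
  have hpc : ({pc} : Finset (Cand β)) ∩ Cfull κ H' = {pc} :=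
    inter_eq_left.2 (singleton_subset_iff.2 (mem_union_left _ (mem_insert_self _ _)))
  simp only [votes, Multiset.map_add, Multiset.map_replicate, Multiset.map_map, Function.comp_def,
    hvote, hpc]

theorem card_votes_inter_image_cH (hS : S ⊆ H') (a : β) :
    ((H'.filter fun t => a ∈ t).image cH ∩ S.image cH).card = (S.filter fun t => a ∈ t).card := by
  have hinj : Function.Injective (cH : Finset β → Cand β) := Sum.inl_injective
  rw [← image_inter _ _ hinj, filter_inter, inter_eq_right.2 hS, card_image_of_injective _ hinj]

theorem marginContrib_votes_pc (hω0 : ω 0 = 0) :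
    marginContrib ω (votes A H' d) (S.image cH) pc = d * ω 1 := by
  rw [marginContrib_eq_sum_ite ω _ (pc_notMem_image_cH S)]
  simp only [votes, Multiset.map_add, Multiset.sum_add, Multiset.map_replicate,
    Multiset.sum_replicate, Multiset.map_map, Function.comp_def, mem_singleton, if_true,
    singleton_inter_of_notMem (pc_notMem_image_cH S), card_empty, zero_add, hω0, sub_zero,
    pc_notMem_image_cH, if_false, Multiset.map_const', smul_zero, add_zero, nsmul_eq_mul]

theorem marginContrib_votes_X (j : ℕ) :
    marginContrib ω (votes A H' d) (S.image cH) (Sum.inr (Sum.inl j)) = 0 := by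
  rw [marginContrib_eq_sum_ite ω _ (by simp [cH])]
  simp [votes, pc, cH]

theorem marginContrib_votes_cH (hS : S ⊆ H') {s : Finset β} (hs : s ∈ H') (hsA : s ⊆ A)
    (hsS : s ∉ S) :
    marginContrib ω (votes A H' d) (S.image cH) (cH s) =
      ∑ a ∈ s, (ω ((S.filter fun t => a ∈ t).card + 1) - ω (S.filter fun t => a ∈ t).card) := by
  rw [marginContrib_eq_sum_ite ω _ (cH_mem_image_cH.not.2 hsS)]
  have hvote : ∀ a, cH s ∈ (H'.filter fun t => a ∈ t).image cH ↔ a ∈ s := fun a => by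
    rw [cH_mem_image_cH, mem_filter, and_iff_right hs]
  have hne : (cH s : Cand β) ≠ pc := Sum.inl_ne_inr
  simp only [votes, Multiset.map_add, Multiset.sum_add, Multiset.map_replicate,
    Multiset.sum_replicate, Multiset.map_map, Function.comp_def, mem_singleton, hne, if_false,
    smul_zero, zero_add, hvote, card_votes_inter_image_cH hS, Finset.sum_map_val, ← sum_filter,
    filter_mem_eq_inter, inter_eq_right.2 hsA]

theorem card_filter_mem_le_one (hSd : (S : Set (Finset β)).Pairwise Disjoint) (a : β) :
    (S.filter fun t => a ∈ t).card ≤ 1 :=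
  card_le_one.2 fun t₁ h₁ t₂ h₂ => by
    rw [mem_filter] at h₁ h₂
    by_contra hne
    exact disjoint_left.1 (hSd h₁.1 h₂.1 hne) h₁.2 h₂.2

theorem marginContrib_votes_cH_le (hω0 : ω 0 = 0) (hω : ω 2 < 2 * ω 1) (hS : S ⊆ H')
    (hSd : (S : Set (Finset β)).Pairwise Disjoint) {s : Finset β} (hs : s ∈ H') (hsA : s ⊆ A)
    (hsd : s.card = d) (hsS : s ∉ S) :
    marginContrib ω (votes A H' d) (S.image cH) (cH s) ≤ d * ω 1 := by
  rw [marginContrib_votes_cH hS hs hsA hsS, ← hsd, ← nsmul_eq_mul, ← sum_const]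
  exact sum_le_sum fun a _ => thiele_delta_le hω0 hω (card_filter_mem_le_one hSd a)

theorem marginContrib_votes_cH_eq_iff (hω0 : ω 0 = 0) (hω : ω 2 < 2 * ω 1) (hS : S ⊆ H')
    (hSd : (S : Set (Finset β)).Pairwise Disjoint) {s : Finset β} (hs : s ∈ H') (hsA : s ⊆ A)
    (hsd : s.card = d) (hsS : s ∉ S) :
    marginContrib ω (votes A H' d) (S.image cH) (cH s) = d * ω 1 ↔ ∀ t ∈ S, Disjoint s t := by
  rw [marginContrib_votes_cH hS hs hsA hsS, ← hsd, ← nsmul_eq_mul, ← sum_const,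
    sum_eq_sum_iff_of_le fun a _ => thiele_delta_le hω0 hω (card_filter_mem_le_one hSd a)]
  simp only [thiele_delta_eq_iff hω0 hω (card_filter_mem_le_one hSd _), card_eq_zero,
    filter_eq_empty_iff]
  exact ⟨fun h t ht => disjoint_left.2 fun a ha hat => h a ha ht hat,
    fun h a ha t ht => disjoint_left.1 (h t ht) ha⟩

theorem mem_maxMarginSet_votes_iff (hω0 : ω 0 = 0) (hω : ω 2 < 2 * ω 1) (hω1 : 0 < ω 1)
    (hd : 0 < d) (hH' : ∀ s ∈ H', s ⊆ A ∧ s.card = d) (hS : S ⊆ H')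
    (hSd : (S : Set (Finset β)).Pairwise Disjoint) {c : Cand β} :
    c ∈ maxMarginSet ω (votes A H' d) (Cfull κ H') (S.image cH) ↔
      c = pc ∨ ∃ s ∈ H', s ∉ S ∧ (∀ t ∈ S, Disjoint s t) ∧ c = cH s := by
  have hX : (0 : ℝ) < d * ω 1 := mul_pos (Nat.cast_pos.2 hd) hω1
  have heq_iff := fun s (hs : s ∈ H') (hsS : s ∉ S) =>
    marginContrib_votes_cH_eq_iff hω0 hω hS hSd hs (hH' s hs).1 (hH' s hs).2 hsS
  have hmax : ∀ c ∈ Cfull κ H' \ S.image cH,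
      marginContrib ω (votes A H' d) (S.image cH) c ≤
        marginContrib ω (votes A H' d) (S.image cH) pc := by
    intro c hc
    rw [marginContrib_votes_pc hω0]
    rcases mem_Cfull_sdiff_image_cH.1 hc with rfl | ⟨j, -, rfl⟩ | ⟨s, hs, hsS, rfl⟩
    · rw [marginContrib_votes_pc hω0]
    · exact (marginContrib_votes_X j).trans_le hX.le
    · exact marginContrib_votes_cH_le hω0 hω hS hSd hs (hH' s hs).1 (hH' s hs).2 hsS
  rw [mem_maxMarginSet_iff_of_le ω (mem_Cfull_sdiff_image_cH.2 (Or.inl rfl)) hmax,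
    marginContrib_votes_pc hω0, mem_Cfull_sdiff_image_cH]
  constructor
  · rintro ⟨rfl | ⟨j, -, rfl⟩ | ⟨s, hs, hsS, rfl⟩, hc⟩
    · exact Or.inl rfl
    · exact absurd ((marginContrib_votes_X j).symm.trans hc) hX.ne
    · exact Or.inr ⟨s, hs, hsS, (heq_iff s hs hsS).1 hc, rfl⟩
  · rintro (rfl | ⟨s, hs, hsS, hdisj, rfl⟩)
    · exact ⟨Or.inl rfl, marginContrib_votes_pc hω0⟩
    · exact ⟨Or.inr (Or.inr ⟨s, hs, hsS, rfl⟩), (heq_iff s hs hsS).2 hdisj⟩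

section Committee

variable (pri : Cand β → ℕ)

theorem seqNext_votes_eq_pc (hω0 : ω 0 = 0) (hω : ω 2 < 2 * ω 1) (hω1 : 0 < ω 1) (hd : 0 < d)
    (hH' : ∀ s ∈ H', s ⊆ A ∧ s.card = d) (hS : S ⊆ H')
    (hSd : (S : Set (Finset β)).Pairwise Disjoint)
    (hblocked : ∀ s ∈ H', s ∉ S → ¬∀ t ∈ S, Disjoint s t) :
    seqNext ω pri (votes A H' d) (Cfull κ H') (S.image cH) = {pc} := by
  have hmem := fun c => mem_maxMarginSet_votes_iff (c := c) (κ := κ) hω0 hω hω1 hd hH' hS hSd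
  refine seqNext_eq_singleton ω pri ((hmem pc).2 (Or.inl rfl)) fun c hc hne => ?_
  rcases (hmem c).1 hc with rfl | ⟨s, hs, hsS, hdisj, -⟩
  exacts [absurd rfl hne, absurd hdisj (hblocked s hs hsS)]

theorem exists_seqNext_votes_eq_cH (hω0 : ω 0 = 0) (hω : ω 2 < 2 * ω 1) (hω1 : 0 < ω 1)
    (hd : 0 < d) (hH' : ∀ s ∈ H', s ⊆ A ∧ s.card = d)
    (hinj : Set.InjOn (fun s => pri (cH s)) H') (hpri : ∀ s ∈ H', pri (cH s) < pri pc)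
    (hS : S ⊆ H') (hSd : (S : Set (Finset β)).Pairwise Disjoint)
    (hfree : ∃ s ∈ H', s ∉ S ∧ ∀ t ∈ S, Disjoint s t) :
    ∃ s ∈ H', s ∉ S ∧ (∀ t ∈ S, Disjoint s t) ∧
      seqNext ω pri (votes A H' d) (Cfull κ H') (S.image cH) = {cH s} := by
  have hmem := fun c => mem_maxMarginSet_votes_iff (c := c) (κ := κ) hω0 hω hω1 hd hH' hS hSd
  obtain ⟨s, hs, hmin⟩ := (H'.filter fun s => s ∉ S ∧ ∀ t ∈ S, Disjoint s t).exists_min_image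
    (fun s => pri (cH s)) (by simpa [Finset.Nonempty] using hfree)
  obtain ⟨hsH, hsS, hdisj⟩ := mem_filter.1 hs
  refine ⟨s, hsH, hsS, hdisj, seqNext_eq_singleton ω pri
    ((hmem _).2 (Or.inr ⟨s, hsH, hsS, hdisj, rfl⟩)) fun c hc hne => ?_⟩
  rcases (hmem c).1 hc with rfl | ⟨t, ht, htS, htdisj, rfl⟩
  · exact hpri s hsH
  · refine (hmin t (mem_filter.2 ⟨ht, htS, htdisj⟩)).lt_of_ne fun h => hne ?_
    rw [hinj hsH ht h]

theorem exists_seqCommittee_votes_eq_image_cH (hω0 : ω 0 = 0) (hω : ω 2 < 2 * ω 1)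
    (hω1 : 0 < ω 1) (hd : 0 < d) (hH' : ∀ s ∈ H', s ⊆ A ∧ s.card = d)
    (hinj : Set.InjOn (fun s => pri (cH s)) H') (hpri : ∀ s ∈ H', pri (cH s) < pri pc) {i : ℕ}
    (hi : pc ∉ seqCommittee ω pri (votes A H' d) (Cfull κ H') i) :
    ∃ S ⊆ H', S.card = i ∧ (S : Set (Finset β)).Pairwise Disjoint ∧
      seqCommittee ω pri (votes A H' d) (Cfull κ H') i = S.image cH := by
  induction i with
  | zero => exact ⟨∅, empty_subset _, rfl, by simp, rfl⟩
  | succ i ih =>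
    rw [seqCommittee] at hi ⊢
    obtain ⟨S, hS, hcard, hSd, hw⟩ := ih fun h => hi (mem_union_left _ h)
    rw [hw] at hi ⊢
    by_cases hfree : ∃ s ∈ H', s ∉ S ∧ ∀ t ∈ S, Disjoint s t
    · obtain ⟨s, hs, hsS, hdisj, hnext⟩ :=
        exists_seqNext_votes_eq_cH pri hω0 hω hω1 hd hH' hinj hpri hS hSd hfree
      refine ⟨insert s S, insert_subset hs hS, by rw [card_insert_of_notMem hsS, hcard], ?_, ?_⟩
      · rw [coe_insert]
        exact hSd.insert fun t ht _ => ⟨hdisj t ht, (hdisj t ht).symm⟩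
      · rw [hnext, image_insert, union_comm, ← insert_eq]
    · rw [seqNext_votes_eq_pc pri hω0 hω hω1 hd hH' hS hSd
        fun s hs hsS h => hfree ⟨s, hs, hsS, h⟩] at hi
      exact absurd (mem_union_right _ (mem_singleton_self _)) hi

theorem pc_notMem_seqCommittee_votes (hω0 : ω 0 = 0) (hω : ω 2 < 2 * ω 1) (hω1 : 0 < ω 1)
    (hd : 0 < d) (hH' : ∀ s ∈ H', s ⊆ A ∧ s.card = d)
    (hinj : Set.InjOn (fun s => pri (cH s)) H') (hpri : ∀ s ∈ H', pri (cH s) < pri pc)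
    (hH'd : (H' : Set (Finset β)).Pairwise Disjoint) {i : ℕ} (hi : i ≤ H'.card) :
    pc ∉ seqCommittee ω pri (votes A H' d) (Cfull κ H') i := by
  induction i with
  | zero => exact notMem_empty _
  | succ i ih =>
    obtain ⟨S, hS, hcard, hSd, hw⟩ := exists_seqCommittee_votes_eq_image_cH pri hω0 hω hω1 hd hH'
      hinj hpri (ih (by omega))
    obtain ⟨s, hs, hsS⟩ := exists_mem_notMem_of_card_lt_card (s := S) (t := H') (by omega)
    obtain ⟨s', -, -, -, hnext⟩ := exists_seqNext_votes_eq_cH pri hω0 hω hω1 hd hH' hinj hpri hS hSd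
      ⟨s, hs, hsS, fun t ht => hH'd hs (hS ht) fun h => hsS (h ▸ ht)⟩
    rw [seqCommittee, hw, hnext, mem_union, mem_singleton]
    exact not_or.2 ⟨pc_notMem_image_cH S, Sum.inl_ne_inr.symm⟩

end Committee

end Reduction

theorem dcac_seq_thiele_general (ω : ℕ → ℝ) (hω0 : ω 0 = 0) (hmono : ∀ i, ω i ≤ ω (i + 1))
    (hω : ω 2 < 2 * ω 1)
    (A : Finset β) (H : Finset (Finset β)) (d : ℕ) (hd : 1 ≤ d)
    (hH : ∀ s ∈ H, s ⊆ A ∧ s.card = d)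
    (κ : ℕ)
    (pri : Cand β → ℕ) (hinj : Set.InjOn pri (Cfull κ H : Set (Cand β)))
    (hpri1 : ∀ s ∈ H, pri (cH s : Cand β) < pri pc) :
    (∃ H' ⊆ H, H'.card = κ ∧ ∀ s ∈ H', ∀ t ∈ H', s ≠ t → Disjoint s t) ↔
      (∃ H' ⊆ H, H'.card ≤ κ ∧
        pc ∉ seqCommittee ω pri ((votes A H d).map (· ∩ Cfull κ H'))
              (Cfull κ H') κ) := by
  have hω1 := thiele_one_pos hmono hω
  have hsub {H'} (hH' : H' ⊆ H) : ∀ s ∈ H', s ⊆ A ∧ s.card = d := fun s hs => hH s (hH' hs)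
  have hinj' {H'} (hH' : H' ⊆ H) : Set.InjOn (fun s => pri (cH s)) H' := fun s hs t ht h =>
    Sum.inl_injective (hinj (cH_mem_Cfull (hH' hs)) (cH_mem_Cfull (hH' ht)) h)
  constructor
  · rintro ⟨P, hP, rfl, hPd⟩
    refine ⟨P, hP, le_rfl, ?_⟩
    rw [votes_map_inter_Cfull hP]
    exact pc_notMem_seqCommittee_votes pri hω0 hω hω1 hd (hsub hP) (hinj' hP)
      (fun s hs => hpri1 s (hP hs)) (fun s hs t ht => hPd s hs t ht) le_rfl
  · rintro ⟨H', hH', -, hpc⟩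
    rw [votes_map_inter_Cfull hH'] at hpc
    obtain ⟨S, hS, hcard, hSd, -⟩ := exists_seqCommittee_votes_eq_image_cH pri hω0 hω hω1 hd
      (hsub hH') (hinj' hH') (fun s hs => hpri1 s (hH' hs)) hpc
    exact ⟨S, hS.trans hH', hcard, fun s hs t ht => hSd hs ht⟩

/-- correctness of the reduction from Regular Set Packing to destructive
control by adding candidates for sequential ω-Thiele rules with `ω(2) < 2ω(1)`. -/
theorem dcac_seq_thiele (ω : ℕ → ℝ) (hω0 : ω 0 = 0) (hmono : ∀ i, ω i ≤ ω (i + 1))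
    (hω : ω 2 < 2 * ω 1)
    (A : Finset β) (H : Finset (Finset β)) (d : ℕ) (hd : 1 ≤ d)
    (hH : ∀ s ∈ H, s ⊆ A ∧ s.card = d)
    (κ : ℕ) (hκ : 1 ≤ κ)
    (pri : Cand β → ℕ) (hinj : Set.InjOn pri (Cfull κ H : Set (Cand β)))
    (hpri1 : ∀ s ∈ H, pri (cH s : Cand β) < pri pc)
    (hpri2 : ∀ s ∈ H, ∀ j ∈ Finset.range κ, pri (cH s : Cand β) < pri (Sum.inr (Sum.inl j) : Cand β))
    (hpri3 : ∀ j ∈ Finset.range κ, pri pc < pri (Sum.inr (Sum.inl j) : Cand β)) :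
    (∃ H' ⊆ H, H'.card = κ ∧ ∀ s ∈ H', ∀ t ∈ H', s ≠ t → Disjoint s t) ↔
      (∃ H' ⊆ H, H'.card ≤ κ ∧
        pc ∉ seqCommittee ω pri ((votes A H d).map (· ∩ Cfull κ H'))
              (Cfull κ H') κ) :=
  dcac_seq_thiele_general ω hω0 hmono hω A H d hd hH κ pri hinj hpri1

end Stmt17
end

section
/- Let G = (R ∪ B, E) be a bipartite graph with R ≠ ∅ in which every r ∈ R has degree exactly d ≥ 1, and let κ be an integer with 0 ≤ κ ≤ |B|. Construct the election with candidates C = C(R) ∪ C(B) ∪ {p} ∪ X, where C(S) = {c(u) : u ∈ S}, p is fresh, and X is a set of d fresh candidates; votes V: one vote {p} ∪ X; |R| copies of the vote {p}; for each r ∈ R, |R| copies of the vote {c(r)}; and for each r ∈ R, one vote v(r) = {c(r)} ∪ C(N_G(r)); committee size k = |R|. Then there exists B' ⊆ B with |B'| ≤ κ dominating R if and only if there exists C' ⊆ C ∖ {p} with |C'| ≤ κ such that p is not contained in any SAV winning k-committee of (C ∖ C', V_{C∖C'}). -/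
/-!
SAV is additive over candidates: the score of a committee is the sum of the scores
`savScore V {c}` of its members. Hence `p` lies in no winning `k`-committee iff at least `k`
candidates score strictly more than `p`. Once a set `C'` not containing `p` is deleted, `p` scores
`|R| + 1 / |({p} ∪ X) ∖ C'|`, a surviving `c(r)` scores `|R| + 1 / |v(r) ∖ C'|`, and every other
candidate at most `|R|`. So `p` is excluded iff every `c(r)` survives and `v(r)` keeps fewer
candidates than `{p} ∪ X`. Both votes have `d + 1` candidates, so this forces `c(b) ∈ C'` for a
neighbour `b` of `r`: the blue vertices of `C'` dominate `R`. Conversely, deleting `C(B')` for a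
dominating `B'` leaves `{p} ∪ X` intact and shrinks every `v(r)`.
-/

open Finset

attribute [local instance] Classical.propDecidable

universe u

variable {α : Type u}

namespace Stmt18

variable {β : Type u} [DecidableEq β]

/-- Candidate type: a candidate `c(u)` for a vertex `u ∈ R ∪ B`, a fresh candidate of the
set `X`, or the distinguished candidate `p`. -/
abbrev Cand (β : Type u) := β ⊕ ℕ ⊕ Unit

/-- The distinguished candidate `p`. -/
def pc : Cand β := Sum.inr (Sum.inr ())

/-- The neighbors of the red vertex `r`. -/
def nbrR (Ed : Finset (β × β)) (r : β) : Finset β := (Ed.filter fun e => e.1 = r).image Prod.snd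

/-- The neighbors of the blue vertex `b`. -/
def nbrB (Ed : Finset (β × β)) (b : β) : Finset β := (Ed.filter fun e => e.2 = b).image Prod.fst

/-- The set `X` of `d` fresh candidates. -/
def Xset (d : ℕ) : Finset (Cand β) :=
  (Finset.range d).image fun j => (Sum.inr (Sum.inl j) : Cand β)

/-- The candidate set `C = C(R) ∪ C(B) ∪ {p} ∪ X`. -/
def Ctot (R B : Finset β) (d : ℕ) : Finset (Cand β) :=
  insert pc ((R ∪ B).image Sum.inl ∪ Xset d)

/-- The votes: one vote `{p} ∪ X`; `|R|` copies of `{p}`; for each `r ∈ R`, `|R|` copies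
of `{c(r)}`; and for each `r ∈ R`, one vote `v(r) = {c(r)} ∪ C(N_G(r))`. -/
def votes (Ed : Finset (β × β)) (R : Finset β) (d : ℕ) : Multiset (Finset (Cand β)) :=
  (insert pc (Xset d) : Finset (Cand β)) ::ₘ
    (Multiset.replicate R.card ({pc} : Finset (Cand β))
      + R.val.bind (fun r => Multiset.replicate R.card ({Sum.inl r} : Finset (Cand β)))
      + R.val.map (fun r => insert (Sum.inl r) ((nbrR Ed r).image Sum.inl)))

end Stmt18

section SAV

variable {α : Type*} [DecidableEq α] {V : Multiset (Finset α)} {C w : Finset α} {k : ℕ}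

theorem card_singleton_inter_div_card (a : α) (v : Finset α) :
    (({a} ∩ v).card : ℝ) / v.card = if a ∈ v then (v.card : ℝ)⁻¹ else 0 := by
  by_cases ha : a ∈ v <;> simp [ha]

theorem card_inter_div_card_le_one (w v : Finset α) : ((w ∩ v).card : ℝ) / v.card ≤ 1 :=
  div_le_one_of_le₀ (by exact_mod_cast card_le_card inter_subset_right) (Nat.cast_nonneg _)

theorem savScore_eq_sum_savScore_singleton (V : Multiset (Finset α)) (w : Finset α) :
    savScore V w = ∑ c ∈ w, savScore V {c} := by
  have hcard (v : Finset α) : ((w ∩ v).card : ℝ) = ∑ c ∈ w, (({c} ∩ v).card : ℝ) := by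
    rw [← filter_mem_eq_inter, card_filter]
    push_cast
    refine sum_congr rfl fun c _ => ?_
    by_cases hc : c ∈ v <;> simp [hc]
  simp only [savScore, hcard, sum_div]
  exact Multiset.sum_map_sum_map _ _

theorem savScore_insert_erase {a b : α} (ha : a ∈ w) (hb : b ∉ w) :
    savScore V (insert b (w.erase a)) = savScore V w - savScore V {a} + savScore V {b} := by
  rw [savScore_eq_sum_savScore_singleton, savScore_eq_sum_savScore_singleton,
    sum_insert fun h => hb (mem_of_mem_erase h), sum_erase_eq_sub ha]
  ring

theorem insert_erase_mem_powersetCard {a b : α} (hw : w ∈ C.powersetCard k) (ha : a ∈ w)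
    (hb : b ∈ C) (hbw : b ∉ w) : insert b (w.erase a) ∈ C.powersetCard k := by
  rw [mem_powersetCard] at hw ⊢
  refine ⟨insert_subset hb ((erase_subset a w).trans hw.1), ?_⟩
  rw [card_insert_of_notMem fun h => hbw (mem_of_mem_erase h), card_erase_of_mem ha, hw.2]
  exact Nat.sub_add_cancel (hw.2 ▸ card_pos.2 ⟨a, ha⟩)

theorem savScore_singleton_le_of_mem_savWinners {a b : α} (hw : w ∈ savWinners C V k)
    (ha : a ∈ w) (hb : b ∈ C) (hbw : b ∉ w) : savScore V {b} ≤ savScore V {a} := by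
  obtain ⟨hwC, hmax⟩ := mem_filter.1 hw
  have := hmax _ (insert_erase_mem_powersetCard hwC ha hb hbw)
  rw [savScore_insert_erase ha hbw] at this
  linarith

theorem savWinners_nonempty (hk : k ≤ C.card) : (savWinners C V k).Nonempty := by
  obtain ⟨w, hw, hmax⟩ := exists_max_image (C.powersetCard k) (savScore V)
    (powersetCard_nonempty.2 hk)
  exact ⟨w, mem_filter.2 ⟨hw, hmax⟩⟩

theorem forall_notMem_savWinners_iff {p : α} (hp : p ∈ C) (hk : k ≤ C.card) :
    (∀ w ∈ savWinners C V k, p ∉ w) ↔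
      k ≤ (C.filter fun c => savScore V {p} < savScore V {c}).card := by
  set S := C.filter fun c => savScore V {p} < savScore V {c}
  have hpS : p ∉ S := fun h => lt_irrefl _ (mem_filter.1 h).2
  constructor
  · intro hnot
    obtain ⟨w, hw⟩ := savWinners_nonempty (V := V) hk
    obtain ⟨hwC, hmax⟩ := mem_filter.1 hw
    have hpw := hnot w hw
    rw [← (mem_powersetCard.1 hwC).2]
    refine card_le_card fun c hc => mem_filter.2 ⟨(mem_powersetCard.1 hwC).1 hc, ?_⟩
    refine (savScore_singleton_le_of_mem_savWinners hw hc hp hpw).lt_of_ne fun heq => ?_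
    -- otherwise swapping `c` for `p` gives a winning committee containing `p`
    refine hnot _ (mem_filter.2 ⟨insert_erase_mem_powersetCard hwC hc hp hpw, fun w' hw' => ?_⟩)
      (mem_insert_self p _)
    rw [savScore_insert_erase hc hpw, heq, sub_add_cancel]
    exact hmax w' hw'
  · intro hcard w hw hpw
    have hwk := (mem_powersetCard.1 (mem_filter.1 hw).1).2
    obtain ⟨c, hc, hcw⟩ := not_subset.1 fun hSw =>
      (card_lt_card ((ssubset_iff_of_subset hSw).2 ⟨p, hpw, hpS⟩)).not_ge (hwk ▸ hcard)
    obtain ⟨hcC, hlt⟩ := mem_filter.1 hc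
    exact (savScore_singleton_le_of_mem_savWinners hw hpw hcC hcw).not_gt hlt

end SAV

namespace Stmt18

variable {β : Type u}

@[simp] theorem inl_ne_pc (u : β) : (Sum.inl u : Cand β) ≠ pc := Sum.inl_ne_inr

variable [DecidableEq β]

def redVote (Ed : Finset (β × β)) (r : β) : Finset (Cand β) :=
  insert (Sum.inl r) ((nbrR Ed r).image Sum.inl)

theorem votes_eq (Ed : Finset (β × β)) (R : Finset β) (d : ℕ) :
    votes Ed R d = insert pc (Xset d) ::ₘ
      (Multiset.replicate R.card {pc}
        + R.val.bind (fun r => Multiset.replicate R.card {Sum.inl r})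
        + R.val.map (redVote Ed)) := rfl

theorem mem_nbrR {Ed : Finset (β × β)} {r b : β} : b ∈ nbrR Ed r ↔ (r, b) ∈ Ed := by
  simp [nbrR]

@[simp] theorem pc_notMem_Xset (d : ℕ) : (pc : Cand β) ∉ Xset d := by simp [pc, Xset]

@[simp] theorem inl_notMem_Xset (u : β) (d : ℕ) : (Sum.inl u : Cand β) ∉ Xset d := by
  simp [Xset]

theorem card_insert_pc_Xset (d : ℕ) : (insert pc (Xset d) : Finset (Cand β)).card = d + 1 := by
  rw [card_insert_of_notMem (pc_notMem_Xset d), Xset,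
    card_image_of_injective _ fun _ _ h => by simpa using h, card_range]

theorem disjoint_insert_pc_Xset_image_inl (d : ℕ) (s : Finset β) :
    Disjoint (insert pc (Xset d)) (s.image Sum.inl) := by
  simp [disjoint_left]

section Reduction

variable {R B : Finset β} {Ed : Finset (β × β)} {d : ℕ} {D : Finset (Cand β)}

theorem inl_mem_Ctot {u : β} (hu : u ∈ R ∪ B) (d : ℕ) : Sum.inl u ∈ Ctot R B d :=
  mem_insert_of_mem (mem_union_left _ (mem_image_of_mem _ hu))

theorem insert_pc_Xset_subset_Ctot (R B : Finset β) (d : ℕ) :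
    insert pc (Xset d) ⊆ Ctot R B d :=
  insert_subset_insert _ subset_union_right

theorem card_add_card_le_card_Ctot (hRB : Disjoint R B) (d : ℕ) :
    R.card + B.card ≤ (Ctot R B d).card := by
  rw [← card_union_of_disjoint hRB,
    ← card_image_of_injective (R ∪ B) (Sum.inl_injective (β := ℕ ⊕ Unit))]
  exact card_le_card (subset_union_left.trans (subset_insert _ _))

theorem nbrR_subset (hEd : ∀ e ∈ Ed, e.1 ∈ R ∧ e.2 ∈ B) (r : β) : nbrR Ed r ⊆ B :=
  fun _ hb => (hEd _ (mem_nbrR.1 hb)).2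

theorem notMem_nbrR (hEd : ∀ e ∈ Ed, e.1 ∈ R ∧ e.2 ∈ B) (hRB : Disjoint R B) {r : β}
    (hr : r ∈ R) (r' : β) : r ∉ nbrR Ed r' :=
  fun h => disjoint_left.1 hRB hr (nbrR_subset hEd r' h)

theorem card_redVote (hEd : ∀ e ∈ Ed, e.1 ∈ R ∧ e.2 ∈ B) (hRB : Disjoint R B) {r : β}
    (hr : r ∈ R) : (redVote Ed r).card = (nbrR Ed r).card + 1 := by
  rw [redVote, card_insert_of_notMem, card_image_of_injective _ Sum.inl_injective]
  simpa using notMem_nbrR hEd hRB hr r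

theorem savScore_votes_map_inter (c : Cand β) :
    savScore ((votes Ed R d).map (· ∩ D)) {c} =
      (({c} ∩ (insert pc (Xset d) ∩ D)).card : ℝ) / (insert pc (Xset d) ∩ D).card
        + R.card * ((({c} ∩ ({pc} ∩ D)).card : ℝ) / ({pc} ∩ D).card)
        + ∑ r ∈ R,
            R.card * ((({c} ∩ ({Sum.inl r} ∩ D)).card : ℝ) / ({Sum.inl r} ∩ D).card)
        + ∑ r ∈ R, (({c} ∩ (redVote Ed r ∩ D)).card : ℝ) / (redVote Ed r ∩ D).card := by
  simp only [savScore, votes_eq, Multiset.map_cons, Multiset.map_add, Multiset.map_bind,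
    Multiset.map_map, Multiset.map_replicate, Multiset.sum_cons, Multiset.sum_add,
    Multiset.sum_bind, Multiset.sum_replicate, nsmul_eq_mul, Function.comp_def, add_assoc]
  rfl

theorem savScore_votes_pc (hD : pc ∈ D) :
    savScore ((votes Ed R d).map (· ∩ D)) {pc} =
      R.card + ((insert pc (Xset d) ∩ D).card : ℝ)⁻¹ := by
  simp [savScore_votes_map_inter, hD, redVote, eq_comm (a := pc)]
  ring

theorem savScore_votes_inl (hEd : ∀ e ∈ Ed, e.1 ∈ R ∧ e.2 ∈ B) (hRB : Disjoint R B)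
    {r : β} (hr : r ∈ R) (hD : Sum.inl r ∈ D) :
    savScore ((votes Ed R d).map (· ∩ D)) {Sum.inl r} =
      R.card + ((redVote Ed r ∩ D).card : ℝ)⁻¹ := by
  simp [savScore_votes_map_inter, card_singleton_inter_div_card, hD, redVote, hr,
    notMem_nbrR hEd hRB hr]

theorem savScore_votes_le_card (hR : R.Nonempty) {c : Cand β} (hcp : c ≠ pc)
    (hcR : ∀ r ∈ R, c ≠ Sum.inl r) :
    savScore ((votes Ed R d).map (· ∩ D)) {c} ≤ R.card := by
  rw [savScore_votes_map_inter]
  rcases c with u | j | ⟨⟩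
  · have hu : u ∉ R := fun h => hcR u h rfl
    calc _ = ∑ r ∈ R, (({Sum.inl u} ∩ (redVote Ed r ∩ D)).card : ℝ)
            / (redVote Ed r ∩ D).card := by
          simp [card_singleton_inter_div_card]
          exact sum_eq_zero fun r hr => if_neg (by rintro ⟨rfl, -⟩; exact hu hr)
      _ ≤ ∑ _r ∈ R, 1 := sum_le_sum fun r _ => card_inter_div_card_le_one _ _
      _ = R.card := by simp
  · calc _ = (({Sum.inr (Sum.inl j)} ∩ (insert pc (Xset d) ∩ D)).card : ℝ)
            / (insert pc (Xset d) ∩ D).card := by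
          simp [card_singleton_inter_div_card, redVote, hcp]
      _ ≤ 1 := card_inter_div_card_le_one _ _
      _ ≤ R.card := by exact_mod_cast hR.card_pos
  · exact absurd rfl hcp

theorem forall_notMem_savWinners_votes_iff (hEd : ∀ e ∈ Ed, e.1 ∈ R ∧ e.2 ∈ B)
    (hRB : Disjoint R B) (hR : R.Nonempty) (hpD : pc ∈ D) (hRD : R.card ≤ D.card) :
    (∀ w ∈ savWinners D ((votes Ed R d).map (· ∩ D)) R.card, pc ∉ w) ↔
      ∀ r ∈ R, Sum.inl r ∈ D ∧
        (redVote Ed r ∩ D).card < (insert pc (Xset d) ∩ D).card := by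
  set V := (votes Ed R d).map (· ∩ D)
  set S := D.filter fun c => savScore V {pc} < savScore V {c}
  have hXpos : (0 : ℝ) < (insert pc (Xset d) ∩ D).card := by
    exact_mod_cast card_pos.2 ⟨pc, mem_inter.2 ⟨mem_insert_self _ _, hpD⟩⟩
  have hpc : (R.card : ℝ) < savScore V {pc} := by
    rw [savScore_votes_pc hpD]
    linarith [inv_pos.2 hXpos]
  have hS : S ⊆ R.image Sum.inl := by
    intro c hc
    have hlt := (mem_filter.1 hc).2
    by_contra hcR
    have hcp : c ≠ pc := by rintro rfl; exact lt_irrefl _ hlt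
    have := savScore_votes_le_card (Ed := Ed) (d := d) (D := D) hR hcp
      fun r hr h => hcR (h ▸ mem_image_of_mem _ hr)
    linarith
  have hmemS {r : β} (hr : r ∈ R) : Sum.inl r ∈ S ↔
      Sum.inl r ∈ D ∧ (redVote Ed r ∩ D).card < (insert pc (Xset d) ∩ D).card := by
    refine mem_filter.trans (and_congr_right fun hrD => ?_)
    have hpos : (0 : ℝ) < (redVote Ed r ∩ D).card := by
      exact_mod_cast card_pos.2 ⟨_, mem_inter.2 ⟨mem_insert_self _ _, hrD⟩⟩
    rw [savScore_votes_pc hpD, savScore_votes_inl hEd hRB hr hrD, add_lt_add_iff_left,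
      inv_lt_inv₀ hXpos hpos, Nat.cast_lt]
  have hcardR : (R.image Sum.inl : Finset (Cand β)).card = R.card :=
    card_image_of_injective _ Sum.inl_injective
  rw [forall_notMem_savWinners_iff hpD hRD]
  constructor
  · intro hcard r hr
    rw [← hmemS hr, eq_of_subset_of_card_le hS (hcardR.trans_le hcard)]
    exact mem_image_of_mem _ hr
  · intro h
    rw [← hcardR]
    exact card_le_card (image_subset_iff.2 fun r hr => (hmemS hr).2 (h r hr))

theorem card_redVote_inter_lt {r b : β} (hdeg : (nbrR Ed r).card = d) (hrb : (r, b) ∈ Ed)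
    (hbD : Sum.inl b ∉ D) (hXD : insert pc (Xset d) ⊆ D) :
    (redVote Ed r ∩ D).card < (insert pc (Xset d) ∩ D).card := by
  have hb : Sum.inl b ∈ redVote Ed r := mem_insert_of_mem (mem_image_of_mem _ (mem_nbrR.2 hrb))
  calc (redVote Ed r ∩ D).card < (redVote Ed r).card :=
        card_lt_card ((ssubset_iff_of_subset inter_subset_left).2
          ⟨_, hb, fun h => hbD (mem_inter.1 h).2⟩)
    _ ≤ (nbrR Ed r).card + 1 := by
        rw [← card_image_of_injective (nbrR Ed r) (Sum.inl_injective (β := ℕ ⊕ Unit))]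
        exact card_insert_le _ _
    _ = (insert pc (Xset d) ∩ D).card := by rw [inter_eq_left.2 hXD, card_insert_pc_Xset, hdeg]

theorem exists_inl_notMem_of_card_redVote_inter_lt (hEd : ∀ e ∈ Ed, e.1 ∈ R ∧ e.2 ∈ B)
    (hRB : Disjoint R B) {r : β} (hr : r ∈ R) (hdeg : (nbrR Ed r).card = d)
    (hrD : Sum.inl r ∈ D) (hlt : (redVote Ed r ∩ D).card < (insert pc (Xset d) ∩ D).card) :
    ∃ b, (r, b) ∈ Ed ∧ Sum.inl b ∉ D := by
  have hnsub : ¬ redVote Ed r ⊆ D := by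
    intro hsub
    have := (card_le_card (inter_subset_left (s₂ := D))).trans (card_insert_pc_Xset d).le
    rw [inter_eq_left.2 hsub, card_redVote hEd hRB hr, hdeg] at hlt
    omega
  obtain ⟨c, hc, hcD⟩ := not_subset.1 hnsub
  obtain rfl | ⟨b, hb, rfl⟩ := mem_insert.1 hc |>.imp_right mem_image.1
  · exact absurd hrD hcD
  · exact ⟨b, mem_nbrR.1 hb, hcD⟩

end Reduction

theorem dcdc_sav_general
    (R B : Finset β) (hRB : Disjoint R B) (Ed : Finset (β × β))
    (hEd : ∀ e ∈ Ed, e.1 ∈ R ∧ e.2 ∈ B)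
    (hR : R.Nonempty)
    (d : ℕ) (hdegR : ∀ r ∈ R, (nbrR Ed r).card = d)
    (κ : ℕ) (hκ : κ ≤ B.card) :
    (∃ B' ⊆ B, B'.card ≤ κ ∧ ∀ r ∈ R, ∃ b ∈ B', (r, b) ∈ Ed) ↔
      (∃ C' ⊆ Ctot R B d \ {pc}, C'.card ≤ κ ∧
        ∀ w ∈ savWinners (Ctot R B d \ C')
            ((votes Ed R d).map (· ∩ (Ctot R B d \ C'))) R.card, pc ∉ w) := by
  have key {C' : Finset (Cand β)} (hpC' : pc ∉ C') (hC'κ : C'.card ≤ κ) :=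
    forall_notMem_savWinners_votes_iff (d := d) hEd hRB hR
      (mem_sdiff.2 ⟨mem_insert_self _ _, hpC'⟩)
      ((le_card_sdiff C' (Ctot R B d)).trans' (by have := card_add_card_le_card_Ctot hRB d; omega))
  constructor
  · rintro ⟨B', hB'B, hB'κ, hdom⟩
    have hC'κ : (B'.image (Sum.inl : β → Cand β)).card ≤ κ := card_image_le.trans hB'κ
    refine ⟨_, fun c hc => ?_, hC'κ, (key (by simp) hC'κ).2 fun r hr => ?_⟩
    · obtain ⟨b, hb, rfl⟩ := mem_image.1 hc
      exact mem_sdiff.2 ⟨inl_mem_Ctot (mem_union_right _ (hB'B hb)) d, by simp⟩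
    obtain ⟨b, hb, hrb⟩ := hdom r hr
    have hr' : Sum.inl r ∉ B'.image (Sum.inl : β → Cand β) := by
      simpa using fun h => disjoint_left.1 hRB hr (hB'B h)
    exact ⟨mem_sdiff.2 ⟨inl_mem_Ctot (mem_union_left _ hr) d, hr'⟩,
      card_redVote_inter_lt (hdegR r hr) hrb (fun h => (mem_sdiff.1 h).2 (mem_image_of_mem _ hb))
        (subset_sdiff.2 ⟨insert_pc_Xset_subset_Ctot R B d,
          disjoint_insert_pc_Xset_image_inl d B'⟩)⟩
  · rintro ⟨C', hC', hC'κ, hnot⟩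
    have hpC' : pc ∉ C' := fun h => (mem_sdiff.1 (hC' h)).2 (mem_singleton_self _)
    refine ⟨B.filter (Sum.inl · ∈ C'), filter_subset _ _,
      (card_le_card_of_injOn Sum.inl (fun b hb => (mem_filter.1 hb).2)
        Sum.inl_injective.injOn).trans hC'κ, fun r hr => ?_⟩
    obtain ⟨hrD, hlt⟩ := (key hpC' hC'κ).1 hnot r hr
    obtain ⟨b, hrb, hbD⟩ :=
      exists_inl_notMem_of_card_redVote_inter_lt hEd hRB hr (hdegR r hr) hrD hlt
    have hbB := (hEd _ hrb).2
    exact ⟨b, mem_filter.2 ⟨hbB, by simpa [Ctot, hbB] using hbD⟩, hrb⟩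

/-- correctness of the reduction from Red-Blue Dominating Set to
destructive control by deleting candidates for SAV. -/
theorem dcdc_sav
    (R B : Finset β) (hRB : Disjoint R B) (Ed : Finset (β × β))
    (hEd : ∀ e ∈ Ed, e.1 ∈ R ∧ e.2 ∈ B)
    (hR : R.Nonempty)
    (d : ℕ) (hd : 1 ≤ d) (hdegR : ∀ r ∈ R, (nbrR Ed r).card = d)
    (κ : ℕ) (hκ : κ ≤ B.card) :
    (∃ B' ⊆ B, B'.card ≤ κ ∧ ∀ r ∈ R, ∃ b ∈ B', (r, b) ∈ Ed) ↔
      (∃ C' ⊆ Ctot R B d \ {pc}, C'.card ≤ κ ∧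
        ∀ w ∈ savWinners (Ctot R B d \ C')
            ((votes Ed R d).map (· ∩ (Ctot R B d \ C'))) R.card, pc ∉ w) :=
  dcdc_sav_general R B hRB Ed hEd hR d hdegR κ hκ

end Stmt18
end

section
/- Let ω be a Thiele function with ω(2) < 2ω(1), and let (A, H, κ) be a Regular Set Packing instance: A a finite set, H a finite collection of d-element subsets of A for some d ≥ 1, and κ an integer with 1 ≤ κ ≤ |H|. Construct the election with candidates C = {c(H) : H ∈ H} ∪ {p}, where p is fresh; votes V: d copies of the vote {p} and, for each a ∈ A, one vote v(a) = {c(H) : a ∈ H ∈ H}; committee size k = κ; and a tie-breaking linear order ⊳ on C in which p is last. Then H contains κ pairwise disjoint sets if and only if there exists C' ⊆ C ∖ {p} with |C'| ≤ |H| − κ such that p is not contained in the seqω winning κ-committee of (C ∖ C', V_{C∖C'}) with respect to ⊳. -/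
open Finset

attribute [local instance] Classical.propDecidable

universe u

variable {α : Type u}

namespace Stmt19

variable {β : Type u} [DecidableEq β]

/-- Candidate type: a candidate `c(H)` for `H ∈ 𝓗`, or the distinguished candidate `p`. -/
abbrev Cand (β : Type u) := Finset β ⊕ Unit

/-- The distinguished candidate `p`. -/
def pc : Cand β := Sum.inr ()

/-- The candidate `c(H)`. -/
def cH (s : Finset β) : Cand β := Sum.inl s

/-- The candidate set `C = {c(H) : H ∈ 𝓗} ∪ {p}`. -/
def Ctot (H : Finset (Finset β)) : Finset (Cand β) := insert pc (H.image cH)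

/-- The votes: `d` copies of `{p}` and, for each `a ∈ A`, the vote
`v(a) = {c(H) : a ∈ H ∈ 𝓗}`. -/
def votes (A : Finset β) (H : Finset (Finset β)) (d : ℕ) : Multiset (Finset (Cand β)) :=
  Multiset.replicate d ({pc} : Finset (Cand β))
    + A.val.map (fun a => (H.filter fun s => a ∈ s).image cH)

/-!
Deleting candidates `C' ⊆ {c(H)}` leaves exactly the reduction applied to the subfamily `𝓖 ⊆ 𝓗`
of sets whose candidates survive. There `p` always has margin contribution `d * ω 1`, a set
disjoint from all sets elected so far also has `d * ω 1`, and a set meeting one of them has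
strictly less, because a voter who is already represented once gains only `ω 2 - ω 1 < ω 1`.
So while `p` is not elected, the rule elects pairwise disjoint sets. Conversely, if `𝓖` is a
packing of size `κ`, every one of the `κ` rounds is a tie between `p` and a fresh set, and `p`
is last in the tie-breaking order.
-/

section SequentialRule

variable [DecidableEq α] (ω : ℕ → ℝ) (pri : α → ℕ) (V : Multiset (Finset α))

theorem marginContrib_eq_sum {w : Finset α} {c : α} (hc : c ∉ w) :
    marginContrib ω V w c =
      (V.map fun v => if c ∈ v then ω ((v ∩ w).card + 1) - ω (v ∩ w).card else 0).sum := by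
  rw [marginContrib, thieleScore, thieleScore, ← Multiset.sum_map_sub]
  refine congrArg _ (Multiset.map_congr rfl fun v _ => ?_)
  split_ifs with hcv
  · rw [inter_insert_of_mem hcv, card_insert_of_notMem fun h => hc (mem_inter.1 h).2]
  · rw [inter_insert_of_notMem hcv, sub_self]

theorem exists_seqNext_eq_singleton (C w : Finset α) (hinj : Set.InjOn pri C)
    (hne : (C \ w).Nonempty) :
    ∃ c ∈ C \ w, seqNext ω pri V C w = {c} ∧
      (∀ c' ∈ C \ w, marginContrib ω V w c' ≤ marginContrib ω V w c) ∧
      (∀ c' ∈ C \ w, marginContrib ω V w c ≤ marginContrib ω V w c' → pri c ≤ pri c') := by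
  obtain ⟨c₀, hc₀, hc₀max⟩ := exists_max_image (C \ w) (marginContrib ω V w) hne
  obtain ⟨c, hc, hcmin⟩ := exists_min_image (maxMarginSet ω V C w) pri
    ⟨c₀, mem_filter.2 ⟨hc₀, hc₀max⟩⟩
  obtain ⟨hcCw, hcmax⟩ := mem_filter.1 hc
  refine ⟨c, hcCw, ?_, hcmax, fun c' hc' hle =>
    hcmin c' (mem_filter.2 ⟨hc', fun c'' hc'' => (hcmax c'' hc'').trans hle⟩)⟩
  ext x
  rw [mem_singleton]
  constructor
  · intro hx
    obtain ⟨hxmax, hxmin⟩ := mem_filter.1 hx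
    exact hinj (mem_sdiff.1 (mem_filter.1 hxmax).1).1 (mem_sdiff.1 hcCw).1
      (le_antisymm (hxmin c hc) (hcmin x hxmax))
  · rintro rfl
    exact mem_filter.2 ⟨hc, hcmin⟩

theorem seqCommittee_succ_eq_insert {C : Finset α} {k : ℕ} {c : α}
    (h : seqNext ω pri V C (seqCommittee ω pri V C k) = {c}) :
    seqCommittee ω pri V C (k + 1) = insert c (seqCommittee ω pri V C k) := by
  rw [seqCommittee, h, union_singleton]

end SequentialRule

theorem cH_injective : Function.Injective (cH : Finset α → Cand α) := Sum.inl_injective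

@[simp]
theorem cH_ne_pc (s : Finset α) : (cH s : Cand α) ≠ pc := Sum.inl_ne_inr

theorem pc_mem_Ctot (H : Finset (Finset β)) : pc ∈ Ctot H := mem_insert_self _ _

@[simp]
theorem cH_mem_image_cH {s : Finset β} {W : Finset (Finset β)} :
    cH s ∈ W.image cH ↔ s ∈ W :=
  cH_injective.mem_finset_image

@[simp]
theorem pc_notMem_image_cH (W : Finset (Finset β)) : (pc : Cand β) ∉ W.image cH := by
  simp [pc, cH]

theorem Ctot_mono {G H : Finset (Finset β)} (h : G ⊆ H) : Ctot G ⊆ Ctot H :=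
  insert_subset_insert pc (image_subset_image h)

theorem Ctot_sdiff_pc (H : Finset (Finset β)) : Ctot H \ {pc} = H.image cH := by
  rw [Ctot, insert_sdiff_of_mem _ (mem_singleton_self _), sdiff_singleton_eq_erase,
    erase_eq_of_notMem (pc_notMem_image_cH H)]

theorem Ctot_sdiff {H : Finset (Finset β)} {C' : Finset (Cand β)} (hC' : C' ⊆ H.image cH) :
    Ctot H \ C' = Ctot (H.filter (cH · ∉ C')) := by
  ext x
  simp only [Ctot, mem_sdiff, mem_insert, mem_image, mem_filter]
  constructor
  · rintro ⟨rfl | ⟨s, hs, rfl⟩, hx⟩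
    · exact Or.inl rfl
    · exact Or.inr ⟨s, ⟨hs, hx⟩, rfl⟩
  · rintro (rfl | ⟨s, ⟨hs, hsC'⟩, rfl⟩)
    · exact ⟨Or.inl rfl, fun h => pc_notMem_image_cH H (hC' h)⟩
    · exact ⟨Or.inr ⟨s, hs, rfl⟩, hsC'⟩

theorem votes_restrict (A : Finset β) {H : Finset (Finset β)} (d : ℕ) {C' : Finset (Cand β)}
    (hC' : C' ⊆ H.image cH) :
    (votes A H d).map (· ∩ (Ctot H \ C')) = votes A (H.filter (cH · ∉ C')) d := by
  rw [Ctot_sdiff hC', votes, votes, Multiset.map_add, Multiset.map_replicate, Multiset.map_map,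
    singleton_inter_of_mem (pc_mem_Ctot _)]
  congr 1
  refine Multiset.map_congr rfl fun a _ => ?_
  ext x
  simp only [Function.comp_apply, Ctot, mem_inter, mem_insert, mem_image, mem_filter]
  constructor
  · rintro ⟨⟨s, ⟨hs, has⟩, rfl⟩, h | ⟨t, ⟨-, ht⟩, hts⟩⟩
    · exact absurd h (cH_ne_pc s)
    · exact ⟨s, ⟨⟨hs, cH_injective hts ▸ ht⟩, has⟩, rfl⟩
  · rintro ⟨s, ⟨⟨hs, hsC'⟩, has⟩, rfl⟩
    exact ⟨⟨s, ⟨hs, has⟩, rfl⟩, Or.inr ⟨s, ⟨hs, hsC'⟩, rfl⟩⟩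

theorem card_filter_mem_le_one {W : Finset (Finset β)}
    (hW : (W : Set (Finset β)).PairwiseDisjoint id) (a : β) : #{t ∈ W | a ∈ t} ≤ 1 :=
  card_le_one.2 fun _ ht _ ht' => hW.elim (mem_filter.1 ht).1 (mem_filter.1 ht').1
    (not_disjoint_iff.2 ⟨a, (mem_filter.1 ht).2, (mem_filter.1 ht').2⟩)

section Margins

variable (ω : ℕ → ℝ) (A : Finset β) (G : Finset (Finset β)) (d : ℕ)

theorem thiele_succ_sub_le (hω0 : ω 0 = 0) (hω : ω 2 < 2 * ω 1) {n : ℕ} (hn : n ≤ 1) :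
    ω (n + 1) - ω n ≤ ω 1 := by
  rcases Nat.le_one_iff_eq_zero_or_eq_one.1 hn with rfl | rfl
  · simp [hω0]
  · linarith

theorem marginContrib_votes_pc (hω0 : ω 0 = 0) {w : Finset (Cand β)} (hw : pc ∉ w) :
    marginContrib ω (votes A G d) w pc = d * ω 1 := by
  rw [marginContrib_eq_sum _ _ hw, votes, Multiset.map_add, Multiset.sum_add,
    Multiset.map_replicate, Multiset.sum_replicate, singleton_inter_of_notMem hw]
  simp [hω0]

theorem marginContrib_votes_cH {s : Finset β} {W : Finset (Finset β)} (hs : s ∈ G) (hsA : s ⊆ A)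
    (hWG : W ⊆ G) (hsW : s ∉ W) :
    marginContrib ω (votes A G d) (W.image cH) (cH s) =
      ∑ a ∈ s, (ω (#{t ∈ W | a ∈ t} + 1) - ω #{t ∈ W | a ∈ t}) := by
  have hvote : ∀ a, (G.filter (a ∈ ·)).image cH ∩ W.image cH = (W.filter (a ∈ ·)).image cH := by
    intro a
    rw [← image_inter _ _ cH_injective]
    congr 1
    ext t
    simp only [mem_inter, mem_filter]
    exact ⟨fun ⟨⟨_, hat⟩, htW⟩ => ⟨htW, hat⟩, fun ⟨htW, hat⟩ => ⟨⟨hWG htW, hat⟩, htW⟩⟩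
  have hmem : ∀ a, cH s ∈ (G.filter (a ∈ ·)).image cH ↔ a ∈ s := fun a => by
    rw [cH_mem_image_cH, mem_filter, and_iff_right hs]
  rw [marginContrib_eq_sum _ _ (cH_mem_image_cH.not.2 hsW), votes, Multiset.map_add,
    Multiset.sum_add, Multiset.map_replicate, Multiset.map_map, sum_map_val]
  simp only [mem_singleton, cH_ne_pc, if_false, Multiset.sum_replicate, smul_zero, zero_add,
    Function.comp_apply, hmem, hvote, card_image_of_injective _ cH_injective]
  rw [sum_ite_mem, inter_eq_right.2 hsA]

theorem marginContrib_votes_cH_of_disjoint (hω0 : ω 0 = 0) {s : Finset β} {W : Finset (Finset β)}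
    (hs : s ∈ G) (hsA : s ⊆ A) (hsd : s.card = d) (hWG : W ⊆ G) (hsW : s ∉ W)
    (hdisj : ∀ t ∈ W, Disjoint s t) :
    marginContrib ω (votes A G d) (W.image cH) (cH s) = d * ω 1 := by
  rw [marginContrib_votes_cH ω A G d hs hsA hWG hsW, ← hsd, ← nsmul_eq_mul, ← sum_const]
  refine sum_congr rfl fun a ha => ?_
  rw [filter_eq_empty_iff.2 fun t ht hat => disjoint_left.1 (hdisj t ht) ha hat, card_empty,
    zero_add, hω0, sub_zero]

theorem marginContrib_votes_cH_lt (hω0 : ω 0 = 0) (hω : ω 2 < 2 * ω 1) {s t : Finset β}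
    {W : Finset (Finset β)} (hs : s ∈ G) (hsA : s ⊆ A) (hsd : s.card = d) (hWG : W ⊆ G)
    (hW : (W : Set (Finset β)).PairwiseDisjoint id) (hsW : s ∉ W) (ht : t ∈ W)
    (hst : ¬Disjoint s t) :
    marginContrib ω (votes A G d) (W.image cH) (cH s) < d * ω 1 := by
  rw [marginContrib_votes_cH ω A G d hs hsA hWG hsW, ← hsd, ← nsmul_eq_mul, ← sum_const]
  obtain ⟨a, has, hat⟩ := not_disjoint_iff.1 hst
  have hcard : #{u ∈ W | a ∈ u} = 1 :=
    le_antisymm (card_filter_mem_le_one hW a) (card_pos.2 ⟨t, mem_filter.2 ⟨ht, hat⟩⟩)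
  refine sum_lt_sum (fun b _ => thiele_succ_sub_le ω hω0 hω (card_filter_mem_le_one hW b))
    ⟨a, has, ?_⟩
  rw [hcard]
  linarith

end Margins

section Greedy

variable (ω : ℕ → ℝ) (A : Finset β) (G : Finset (Finset β)) (d : ℕ) (pri : Cand β → ℕ)

theorem exists_packing_of_pc_notMem_seqCommittee (hω0 : ω 0 = 0) (hω : ω 2 < 2 * ω 1)
    (hG : ∀ s ∈ G, s ⊆ A ∧ s.card = d) (hinj : Set.InjOn pri (Ctot G : Set (Cand β))) {j : ℕ}
    (hp : pc ∉ seqCommittee ω pri (votes A G d) (Ctot G) j) :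
    ∃ W ⊆ G, (W : Set (Finset β)).PairwiseDisjoint id ∧ W.card = j ∧
      seqCommittee ω pri (votes A G d) (Ctot G) j = W.image cH := by
  induction j with
  | zero => exact ⟨∅, empty_subset _, by simp, rfl, rfl⟩
  | succ j ih =>
    have hpj : pc ∉ seqCommittee ω pri (votes A G d) (Ctot G) j := fun h =>
      hp (mem_union_left _ h)
    obtain ⟨W, hWG, hW, rfl, hseq⟩ := ih hpj
    obtain ⟨c, hc, hnext, hmax, -⟩ := exists_seqNext_eq_singleton ω pri (votes A G d) (Ctot G) _
      hinj ⟨pc, mem_sdiff.2 ⟨pc_mem_Ctot G, hpj⟩⟩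
    rw [seqCommittee_succ_eq_insert ω pri _ hnext, hseq] at hp ⊢
    rw [hseq] at hc hmax
    obtain ⟨hcG, hcW⟩ := mem_sdiff.1 hc
    obtain ⟨s, hs, rfl⟩ : ∃ s ∈ G, cH s = c := by
      rcases mem_insert.1 hcG with rfl | hc
      · exact absurd (mem_insert_self _ _) hp
      · exact mem_image.1 hc
    have hsW : s ∉ W := cH_mem_image_cH.not.1 hcW
    have hpc_le : d * ω 1 ≤ marginContrib ω (votes A G d) (W.image cH) (cH s) := by
      rw [← marginContrib_votes_pc ω A G d hω0 (pc_notMem_image_cH W)]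
      exact hmax pc (mem_sdiff.2 ⟨pc_mem_Ctot G, pc_notMem_image_cH W⟩)
    have hdisj : ∀ t ∈ W, Disjoint s t := fun t ht => by_contra fun hst =>
      (marginContrib_votes_cH_lt ω A G d hω0 hω hs (hG s hs).1 (hG s hs).2 hWG hW hsW ht hst
        ).not_ge hpc_le
    refine ⟨insert s W, insert_subset hs hWG, ?_, card_insert_of_notMem hsW, (image_insert _ _ _).symm⟩
    rw [coe_insert]
    exact hW.insert fun t ht _ => hdisj t ht

theorem pc_notMem_seqCommittee_of_pairwiseDisjoint (hω0 : ω 0 = 0) (hω : ω 2 < 2 * ω 1)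
    (hG : ∀ s ∈ G, s ⊆ A ∧ s.card = d) (hinj : Set.InjOn pri (Ctot G : Set (Cand β)))
    (hpri : ∀ s ∈ G, pri (cH s) < pri pc) (hGdisj : (G : Set (Finset β)).PairwiseDisjoint id)
    {j : ℕ} (hj : j ≤ G.card) :
    pc ∉ seqCommittee ω pri (votes A G d) (Ctot G) j := by
  induction j with
  | zero => exact notMem_empty _
  | succ j ih =>
    have hpj := ih (by omega)
    obtain ⟨W, hWG, -, rfl, hseq⟩ :=
      exists_packing_of_pc_notMem_seqCommittee ω A G d pri hω0 hω hG hinj hpj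
    obtain ⟨s, hs⟩ : (G \ W).Nonempty := by
      rw [← card_pos, card_sdiff_of_subset hWG]
      omega
    obtain ⟨hsG, hsW⟩ := mem_sdiff.1 hs
    obtain ⟨c, -, hnext, -, htie⟩ := exists_seqNext_eq_singleton ω pri (votes A G d) (Ctot G) _
      hinj ⟨pc, mem_sdiff.2 ⟨pc_mem_Ctot G, hpj⟩⟩
    rw [seqCommittee_succ_eq_insert ω pri _ hnext, hseq, mem_insert, not_or]
    rw [hseq] at htie
    refine ⟨fun hpc => ?_, pc_notMem_image_cH W⟩
    subst hpc
    have hfresh : marginContrib ω (votes A G d) (W.image cH) (cH s) = d * ω 1 :=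
      marginContrib_votes_cH_of_disjoint ω A G d hω0 hsG (hG s hsG).1 (hG s hsG).2 hWG hsW
        fun t ht => hGdisj hsG (hWG ht) fun hst => hsW (hst ▸ ht)
    refine (hpri s hsG).not_ge (htie (cH s) ?_ ?_)
    · exact mem_sdiff.2 ⟨mem_insert_of_mem (mem_image_of_mem _ hsG), cH_mem_image_cH.not.2 hsW⟩
    · rw [hfresh, marginContrib_votes_pc ω A G d hω0 (pc_notMem_image_cH W)]

end Greedy

theorem dcdc_seq_thiele_general (ω : ℕ → ℝ) (hω0 : ω 0 = 0)
    (hω : ω 2 < 2 * ω 1)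
    (A : Finset β) (H : Finset (Finset β)) (d : ℕ)
    (hH : ∀ s ∈ H, s ⊆ A ∧ s.card = d)
    (κ : ℕ)
    (pri : Cand β → ℕ) (hinj : Set.InjOn pri (Ctot H : Set (Cand β)))
    (hpri : ∀ s ∈ H, pri (cH s : Cand β) < pri pc) :
    (∃ H' ⊆ H, H'.card = κ ∧ ∀ s ∈ H', ∀ t ∈ H', s ≠ t → Disjoint s t) ↔
      (∃ C' ⊆ Ctot H \ {pc}, C'.card ≤ H.card - κ ∧
        pc ∉ seqCommittee ω pri ((votes A H d).map (· ∩ (Ctot H \ C')))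
              (Ctot H \ C') κ) := by
  simp only [Ctot_sdiff_pc]
  constructor
  · rintro ⟨H', hH'H, rfl, hH'⟩
    have hC' : (H \ H').image cH ⊆ H.image cH := image_subset_image sdiff_subset
    have hG : H.filter (cH · ∉ (H \ H').image cH) = H' := by
      ext s
      simp only [mem_filter, cH_mem_image_cH, mem_sdiff, not_and, not_not]
      exact ⟨fun ⟨hs, h⟩ => h hs, fun hs => ⟨hH'H hs, fun _ => hs⟩⟩
    refine ⟨_, hC', card_image_le.trans (card_sdiff_of_subset hH'H).le, ?_⟩
    rw [votes_restrict A d hC', Ctot_sdiff hC', hG]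
    exact pc_notMem_seqCommittee_of_pairwiseDisjoint ω A H' d pri hω0 hω
      (fun s hs => hH s (hH'H hs)) (hinj.mono (Ctot_mono hH'H)) (fun s hs => hpri s (hH'H hs))
      hH' le_rfl
  · rintro ⟨C', hC', -, hpc⟩
    rw [votes_restrict A d hC', Ctot_sdiff hC'] at hpc
    obtain ⟨W, hWG, hW, hWcard, -⟩ := exists_packing_of_pc_notMem_seqCommittee ω A _ d pri hω0 hω
      (fun s hs => hH s (mem_filter.1 hs).1) (hinj.mono (Ctot_mono (filter_subset _ _))) hpc
    exact ⟨W, hWG.trans (filter_subset _ _), hWcard, fun s hs t ht hst => hW hs ht hst⟩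

/-- correctness of the reduction from Regular Set Packing to destructive
control by deleting candidates for sequential ω-Thiele rules with `ω(2) < 2ω(1)`. -/
theorem dcdc_seq_thiele (ω : ℕ → ℝ) (hω0 : ω 0 = 0) (hmono : ∀ i, ω i ≤ ω (i + 1))
    (hω : ω 2 < 2 * ω 1)
    (A : Finset β) (H : Finset (Finset β)) (d : ℕ) (hd : 1 ≤ d)
    (hH : ∀ s ∈ H, s ⊆ A ∧ s.card = d)
    (κ : ℕ) (hκ1 : 1 ≤ κ) (hκ2 : κ ≤ H.card)
    (pri : Cand β → ℕ) (hinj : Set.InjOn pri (Ctot H : Set (Cand β)))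
    (hpri : ∀ s ∈ H, pri (cH s : Cand β) < pri pc) :
    (∃ H' ⊆ H, H'.card = κ ∧ ∀ s ∈ H', ∀ t ∈ H', s ≠ t → Disjoint s t) ↔
      (∃ C' ⊆ Ctot H \ {pc}, C'.card ≤ H.card - κ ∧
        pc ∉ seqCommittee ω pri ((votes A H d).map (· ∩ (Ctot H \ C')))
              (Ctot H \ C') κ) :=
  dcdc_seq_thiele_general ω hω0 hω A H d hH κ pri hinj hpri

end Stmt19
end
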